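/- arXiv:0905.1069 — 8 statements merged into one kernel-verified Lean document; each statement's English description precedes it below -/
import Mathlib

section
/- Let Y be a topological space and let 𝒰 be an open cover of Y. If two paths a, b : [0,1] → Y with the same endpoints are homotopic relative to their endpoints, then a and b are 𝒰-equivalent. -/
open unitInterval

/-- `a` is a reparametrization of `c`: `a` is the precomposition of `c` with a continuous
weakly monotone surjection of `[0,1]` fixing `0` and `1`. -/
def IsReparamOf {Y : Type*} [TopologicalSpace Y] {x y : Y} (a c : Path x y) : Prop :=
  ∃ f : I → I, Continuous f ∧ Monotone f ∧ Function.Surjective f ∧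
    f 0 = 0 ∧ f 1 = 1 ∧ ∀ t, a t = c (f t)

/-- Two paths with the same endpoints are `𝒰`-contiguous if they are reparametrizations of
concatenations `u + a' + v` and `u + b' + v` where the images of `a'` and `b'` are both
contained in a single member of `𝒰`. -/
def UContiguous {Y : Type*} [TopologicalSpace Y] (𝒰 : Set (Set Y)) {x y : Y}
    (a b : Path x y) : Prop :=
  ∃ (p q : Y) (u : Path x p) (a' b' : Path p q) (v : Path q y) (U : Set Y),
    U ∈ 𝒰 ∧ Set.range a' ∪ Set.range b' ⊆ U ∧
    IsReparamOf a ((u.trans a').trans v) ∧ IsReparamOf b ((u.trans b').trans v)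

/-- `𝒰`-equivalence: the reflexive–transitive closure of `𝒰`-contiguity. -/
def UEquiv {Y : Type*} [TopologicalSpace Y] (𝒰 : Set (Set Y)) {x y : Y}
    (a b : Path x y) : Prop :=
  Relation.ReflTransGen (UContiguous 𝒰) a b

/-! Pull the cover back along a homotopy `H : I × I → Y` from `a` to `b` and take a Lebesgue
number `1/n`. Staircase paths `t ↦ H (φ τ, τ)` sweep the square one row `[i/n, (i+1)/n]` at a
time, in `2n + 1` steps per row. Two consecutive staircases differ only over a `τ`-window of length
`1/n`, where both stay in a ball of radius `1/n`, hence in one member of `𝒰`: they are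
`𝒰`-contiguous. The staircases run on the time `τ = 3t - 1` clamped to `[0, 1]`, so they are
constant near both ends: every window sits strictly inside `(0, 1)`, and the first and last
staircases are reparametrizations of `a` and `b`, to which a path is always `𝒰`-contiguous. -/

open Set Topology

local notation "projI" => Set.projIcc (0 : ℝ) 1 zero_le_one

noncomputable def ramp (a b x : ℝ) : ℝ := max 0 (min 1 ((x - a) / (b - a)))

section Ramp

variable {a b x : ℝ}

lemma ramp_of_le (hab : a ≤ b) (hx : x ≤ a) : ramp a b x = 0 :=
  max_eq_left <| min_le_of_right_le <| div_nonpos_of_nonpos_of_nonneg (by linarith) (by linarith)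

lemma ramp_of_ge (hab : a < b) (hx : b ≤ x) : ramp a b x = 1 := by
  rw [ramp, min_eq_left ((one_le_div₀ (by linarith)).2 (by linarith))]
  exact max_eq_right zero_le_one

lemma ramp_of_mem (hx : x ∈ Icc a b) : ramp a b x = (x - a) / (b - a) := by
  have h₀ : 0 ≤ (x - a) / (b - a) := div_nonneg (by linarith [hx.1]) (by linarith [hx.1, hx.2])
  rw [ramp, min_eq_right (div_le_one_of_le₀ (by linarith [hx.2]) (by linarith [hx.1, hx.2])),
    max_eq_right h₀]

lemma ramp_nonneg : 0 ≤ ramp a b x := le_max_left _ _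

lemma ramp_le_one : ramp a b x ≤ 1 := max_le zero_le_one (min_le_left _ _)

lemma monotone_ramp (hab : a ≤ b) : Monotone (ramp a b) := fun _ _ h =>
  max_le_max le_rfl <| min_le_min le_rfl <| div_le_div_of_nonneg_right (by linarith) (by linarith)

@[fun_prop]
lemma continuous_ramp : Continuous (ramp a b) := by
  unfold ramp; fun_prop

end Ramp

-- Piecewise linear, sending `0, r, s, 1` to `0, 1/4, 1/2, 1`, the break points of
-- `(u.trans m).trans v`.
noncomputable def breakMap (r s t : ℝ) : ℝ := (ramp 0 r t + ramp r s t + 2 * ramp s 1 t) / 4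

section BreakMap

variable {r s : ℝ}

lemma continuous_breakMap : Continuous (breakMap r s) := by
  unfold breakMap; fun_prop

lemma monotone_breakMap (hr : 0 ≤ r) (hrs : r ≤ s) (hs : s ≤ 1) : Monotone (breakMap r s) :=
  fun t t' h => by
    have := monotone_ramp hr h
    have := monotone_ramp hrs h
    have := monotone_ramp hs h
    unfold breakMap
    linarith

lemma breakMap_zero (hr : 0 ≤ r) (hrs : r ≤ s) (hs : s ≤ 1) : breakMap r s 0 = 0 := by
  simp only [breakMap, ramp_of_le hr le_rfl, ramp_of_le hrs hr, ramp_of_le hs (hr.trans hrs)]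
  norm_num

lemma breakMap_one (hr : 0 < r) (hrs : r < s) (hs : s < 1) : breakMap r s 1 = 1 := by
  simp only [breakMap, ramp_of_ge hr (hrs.trans hs).le, ramp_of_ge hrs hs.le, ramp_of_ge hs le_rfl]
  norm_num

end BreakMap

-- Height `(i+1)/n` for `τ ≤ (m-1)/(2n)`, height `i/n` for `τ ≥ m/(2n)`, linear in between.
noncomputable def stairProfile (n i m : ℕ) : C(ℝ, ℝ) where
  toFun τ := (i + 1 - ramp (m - 1) m (2 * n * τ)) / n
  continuous_toFun := by fun_prop

lemma stairProfile_eqOn_zero (n i : ℕ) :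
    EqOn (stairProfile n i 0) (ContinuousMap.const ℝ ((i : ℝ) / n)) (Icc 0 1) := fun τ hτ => by
  have : 0 ≤ 2 * (n : ℝ) * τ := mul_nonneg (by positivity) hτ.1
  simp only [stairProfile, ContinuousMap.coe_mk, ContinuousMap.const_apply, Nat.cast_zero,
    ramp_of_ge (by norm_num : (0 : ℝ) - 1 < 0) this]
  ring

lemma stairProfile_eqOn_top (n i : ℕ) :
    EqOn (stairProfile n i (2 * n + 1)) (ContinuousMap.const ℝ ((↑(i + 1) : ℝ) / n))
      (Icc 0 1) := fun τ hτ => by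
  have : 2 * (n : ℝ) * τ ≤ ↑(2 * n + 1) - 1 := by
    push_cast; nlinarith [hτ.2, (Nat.cast_nonneg n : (0 : ℝ) ≤ n)]
  simp only [stairProfile, ContinuousMap.coe_mk, ContinuousMap.const_apply,
    ramp_of_le (sub_le_self _ zero_le_one) this]
  push_cast
  ring

lemma stairProfile_eqOn_succ {n : ℕ} (hn : 0 < n) (i m : ℕ) :
    EqOn (stairProfile n i m) (stairProfile n i (m + 1))
      (Ioo ((m - 1) / (2 * n)) ((m + 1) / (2 * n)))ᶜ := fun τ hτ => by
  have hn' : (0 : ℝ) < 2 * n := by positivity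
  simp only [stairProfile, ContinuousMap.coe_mk]
  push_cast
  rw [mem_compl_iff, mem_Ioo, not_and_or, not_lt, not_lt] at hτ
  rcases hτ with h | h
  · rw [le_div_iff₀ hn'] at h
    rw [ramp_of_le (by linarith) (by linarith), ramp_of_le (by linarith) (by linarith)]
  · rw [div_le_iff₀ hn'] at h
    rw [ramp_of_ge (by linarith) (by linarith), ramp_of_ge (by linarith) (by linarith)]

lemma abs_stairProfile_sub_le (n i m : ℕ) (τ : ℝ) : |stairProfile n i m τ - i / n| ≤ 1 / n := by
  have h₀ : 0 ≤ ramp (m - 1) m (2 * n * τ) := ramp_nonneg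
  have h₁ : ramp (m - 1) m (2 * n * τ) ≤ 1 := ramp_le_one
  rw [show stairProfile n i m τ - i / n = (1 - ramp (m - 1) m (2 * n * τ)) / n by
      simp only [stairProfile, ContinuousMap.coe_mk]; ring,
    abs_div, abs_of_nonneg (by linarith), Nat.abs_cast]
  gcongr
  linarith

lemma unitInterval.surjective_of_continuous {f : I → I} (hf : Continuous f) (h₀ : f 0 = 0)
    (h₁ : f 1 = 1) : Function.Surjective f := fun z =>
  intermediate_value_univ 0 1 hf (by rw [h₀, h₁]; exact ⟨z.2.1, z.2.2⟩)

lemma unitInterval.exists_Icc_subset_of_mem_nhds {O : Set I} {t₀ : I} (hO : O ∈ 𝓝 t₀)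
    (h₀ : 0 < t₀) (h₁ : t₀ < 1) : ∃ r s : I, 0 < r ∧ r < s ∧ s < 1 ∧ Icc r s ⊆ O := by
  obtain ⟨l, ⟨hl₀, hlt⟩, hl⟩ := exists_Ioc_subset_of_mem_nhds' hO h₀
  obtain ⟨u, ⟨htu, hu₁⟩, hu⟩ := exists_Ico_subset_of_mem_nhds' hO h₁
  obtain ⟨r, hlr, hrt⟩ := exists_between hlt
  obtain ⟨s, hts, hsu⟩ := exists_between htu
  refine ⟨r, s, hl₀.trans_lt hlr, hrt.trans hts, hsu.trans_le hu₁, fun z hz => ?_⟩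
  rcases le_total z t₀ with h | h
  · exact hl ⟨hlr.trans_le hz.1, h⟩
  · exact hu ⟨h, hz.2.trans_lt hsu⟩

lemma dist_projIcc_le (v w : ℝ) : dist (projI v) (projI w) ≤ |v - w| :=
  (Subtype.dist_eq _ _).trans_le (abs_projIcc_sub_projIcc _)

noncomputable def padTime (t : I) : I := projI (3 * t - 1)

lemma continuous_padTime : Continuous padTime := by
  unfold padTime; fun_prop

lemma monotone_padTime : Monotone padTime := fun t t' h =>
  monotone_projIcc _ (by have : (t : ℝ) ≤ t' := h; linarith)

lemma padTime_zero : padTime 0 = 0 := projIcc_eq_zero.2 (by norm_num)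

lemma padTime_one : padTime 1 = 1 := projIcc_eq_one.2 (by norm_num)

lemma exists_pos_nat_closedBall_subset_preimage {X Y : Type*} [PseudoMetricSpace X]
    [CompactSpace X] [TopologicalSpace Y] {𝒰 : Set (Set Y)} {f : X → Y} (hf : Continuous f)
    (hopen : ∀ U ∈ 𝒰, IsOpen U) (hcover : ⋃₀ 𝒰 = univ) :
    ∃ n : ℕ, 0 < n ∧ ∀ z, ∃ U ∈ 𝒰, Metric.closedBall z (1 / n) ⊆ f ⁻¹' U := by
  obtain ⟨δ, hδ, hball⟩ := lebesgue_number_lemma_of_metric (c := fun U : 𝒰 => f ⁻¹' U)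
    isCompact_univ (fun U => (hopen U U.2).preimage hf) fun z _ => by
      obtain ⟨U, hU, hz⟩ : f z ∈ ⋃₀ 𝒰 := hcover ▸ mem_univ _
      exact mem_iUnion.2 ⟨⟨U, hU⟩, hz⟩
  obtain ⟨n, hn⟩ := exists_nat_one_div_lt hδ
  refine ⟨n + 1, n.succ_pos, fun z => ?_⟩
  obtain ⟨U, hU⟩ := hball z (mem_univ z)
  exact ⟨U, U.2, (Metric.closedBall_subset_ball (by exact_mod_cast hn)).trans hU⟩

section Paths

variable {Y : Type*} [TopologicalSpace Y] {𝒰 : Set (Set Y)} {x y : Y}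

lemma IsReparamOf.of_eq_comp {a c : Path x y} {f : I → I} (hf : Continuous f) (hfm : Monotone f)
    (h₀ : f 0 = 0) (h₁ : f 1 = 1) (h : ∀ t, a t = c (f t)) : IsReparamOf a c :=
  ⟨f, hf, hfm, unitInterval.surjective_of_continuous hf h₀ h₁, h₀, h₁, h⟩

lemma IsReparamOf.of_eq_extend {a c : Path x y} {g : ℝ → ℝ} (hg : Continuous g) (hgm : Monotone g)
    (h₀ : g 0 = 0) (h₁ : g 1 = 1) (h : ∀ t : I, a t = c.extend (g t)) : IsReparamOf a c :=
  .of_eq_comp (continuous_projIcc.comp (hg.comp continuous_subtype_val))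
    ((monotone_projIcc _).comp (hgm.comp fun _ _ => id))
    (by simp [h₀]) (by simp [h₁]) h

lemma IsReparamOf.trans {a b c : Path x y} (hab : IsReparamOf a b) (hbc : IsReparamOf b c) :
    IsReparamOf a c := by
  obtain ⟨f, hf, hfm, hfs, hf₀, hf₁, ha⟩ := hab
  obtain ⟨g, hg, hgm, hgs, hg₀, hg₁, hb⟩ := hbc
  exact ⟨g ∘ f, hg.comp hf, hgm.comp hfm, hgs.comp hfs, by simp [hf₀, hg₀], by simp [hf₁, hg₁],
    fun t => (ha t).trans (hb (f t))⟩

lemma Path.isReparamOf_reparam (γ : Path x y) {f : I → I} (hf : Continuous f) (hfm : Monotone f)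
    (h₀ : f 0 = 0) (h₁ : f 1 = 1) : IsReparamOf (γ.reparam f hf h₀ h₁) γ :=
  .of_eq_comp hf hfm h₀ h₁ fun _ => rfl

lemma Path.extend_of_coe_eq_subpath {P Q : Y} {u : Path P Q} {p : Path x y} {t₀ t₁ : I}
    (hu : ⇑u = p.subpath t₀ t₁) {w : ℝ} (hw : w ∈ Icc 0 1) :
    u.extend w = p.extend ((1 - w) * t₀ + w * t₁) := by
  rw [Path.extend_apply _ hw, hu]
  exact (p.extend_extends' _).symm

lemma Path.eq_extend_trans_trans_breakMap (p : Path x y) {r s : I} (hr : 0 < r) (hrs : r < s)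
    (hs : s < 1) {P Q : Y} {u : Path x P} {m : Path P Q} {v : Path Q y}
    (hu : ⇑u = p.subpath 0 r) (hm : ⇑m = p.subpath r s) (hv : ⇑v = p.subpath s 1) (t : I) :
    p t = ((u.trans m).trans v).extend (breakMap r s t) := by
  have hr' : (0 : ℝ) < r := hr
  have hrs' : (r : ℝ) < s := hrs
  have hs' : (s : ℝ) < 1 := hs
  have : (r : ℝ) ≠ 0 := hr'.ne'
  have : (s : ℝ) - r ≠ 0 := (sub_pos.2 hrs').ne'
  have : 1 - (s : ℝ) ≠ 0 := (sub_pos.2 hs').ne'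
  have ht₀ : (0 : ℝ) ≤ t := t.2.1
  have ht₁ : (t : ℝ) ≤ 1 := t.2.2
  rw [← p.extend_extends' t, breakMap]
  rcases le_total (t : ℝ) r with htr | htr
  · have hw : ramp 0 r t ∈ Icc 0 1 := ⟨ramp_nonneg, ramp_le_one⟩
    rw [ramp_of_le hrs'.le htr, ramp_of_le hs'.le (htr.trans hrs'.le),
      Path.extend_trans_of_le_half _ _ (by linarith [hw.2]),
      Path.extend_trans_of_le_half _ _ (by linarith [hw.2]),
      Path.extend_of_coe_eq_subpath hu (by convert hw using 1; ring), ramp_of_mem ⟨ht₀, htr⟩,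
      Set.Icc.coe_zero]
    congr 1
    field_simp
    ring
  rcases le_total (t : ℝ) s with hts | hts
  · have hw : ramp r s t ∈ Icc 0 1 := ⟨ramp_nonneg, ramp_le_one⟩
    rw [ramp_of_ge hr' htr, ramp_of_le hs'.le hts,
      Path.extend_trans_of_le_half _ _ (by linarith [hw.2]),
      Path.extend_trans_of_half_le _ _ (by linarith [hw.1]),
      Path.extend_of_coe_eq_subpath hm (by convert hw using 1; ring), ramp_of_mem ⟨htr, hts⟩]
    congr 1
    field_simp
    ring
  · have hw : ramp s 1 t ∈ Icc 0 1 := ⟨ramp_nonneg, ramp_le_one⟩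
    rw [ramp_of_ge hr' (hrs'.le.trans hts), ramp_of_ge hrs' hts,
      Path.extend_trans_of_half_le _ _ (by linarith [hw.1]),
      Path.extend_of_coe_eq_subpath hv (by convert hw using 1; ring), ramp_of_mem ⟨hts, ht₁⟩,
      Set.Icc.coe_one]
    congr 1
    field_simp
    ring

lemma Path.isReparamOf_trans_trans (p : Path x y) {r s : I} (hr : 0 < r) (hrs : r < s)
    (hs : s < 1) {P Q : Y} {u : Path x P} {m : Path P Q} {v : Path Q y}
    (hu : ⇑u = p.subpath 0 r) (hm : ⇑m = p.subpath r s) (hv : ⇑v = p.subpath s 1) :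
    IsReparamOf p ((u.trans m).trans v) :=
  .of_eq_extend continuous_breakMap (monotone_breakMap hr.le hrs.le hs.le)
    (breakMap_zero hr.le hrs.le hs.le) (breakMap_one hr hrs hs)
    (p.eq_extend_trans_trans_breakMap hr hrs hs hu hm hv)

lemma UContiguous.symm {a b : Path x y} (h : UContiguous 𝒰 a b) : UContiguous 𝒰 b a := by
  obtain ⟨P, Q, u, a', b', v, U, hU, hran, ha, hb⟩ := h
  exact ⟨P, Q, u, b', a', v, U, hU, by rwa [union_comm], hb, ha⟩

lemma UContiguous.of_eqOn_compl_Ioo {p q : Path x y} {r s : I} (hr : 0 < r) (hrs : r < s)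
    (hs : s < 1) (hpq : EqOn p q (Ioo r s)ᶜ) {U : Set Y} (hU : U ∈ 𝒰)
    (hpU : p '' Icc r s ⊆ U) (hqU : q '' Icc r s ⊆ U) : UContiguous 𝒰 p q := by
  refine ⟨p r, p s, (p.subpath 0 r).cast p.source.symm rfl, p.subpath r s,
    (q.subpath r s).cast (hpq fun h => h.1.false) (hpq fun h => h.2.false),
    (p.subpath s 1).cast rfl p.target.symm, U, hU, ?_,
    p.isReparamOf_trans_trans hr hrs hs rfl rfl rfl,
    q.isReparamOf_trans_trans hr hrs hs ?_ rfl ?_⟩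
  · rw [Path.cast_coe, Path.range_subpath_of_le _ _ _ hrs.le,
      Path.range_subpath_of_le _ _ _ hrs.le]
    exact union_subset hpU hqU
  · funext w
    exact hpq fun h => (Set.Icc.convexComb_le hr.le w).not_gt h.1
  · funext w
    exact hpq fun h => (Set.Icc.le_convexComb hs.le w).not_gt h.2

lemma UContiguous.of_isReparamOf (hopen : ∀ U ∈ 𝒰, IsOpen U) (hcover : ⋃₀ 𝒰 = univ)
    {a b : Path x y} (h : IsReparamOf b a) : UContiguous 𝒰 a b := by
  obtain ⟨t₀, h₀, h₁⟩ := exists_between (zero_lt_one' I)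
  obtain ⟨U, hU, hat⟩ : a t₀ ∈ ⋃₀ 𝒰 := hcover ▸ mem_univ _
  obtain ⟨r, s, hr, hrs, hs, hsub⟩ := unitInterval.exists_Icc_subset_of_mem_nhds
    (((hopen U hU).preimage a.continuous).mem_nhds hat) h₀ h₁
  have hc := a.isReparamOf_trans_trans hr hrs hs (u := (a.subpath 0 r).cast a.source.symm rfl)
    (v := (a.subpath s 1).cast rfl a.target.symm) rfl rfl rfl
  refine ⟨_, _, _, a.subpath r s, a.subpath r s, _, U, hU, ?_, hc, h.trans hc⟩
  rw [union_self, Path.range_subpath_of_le _ _ _ hrs.le, image_subset_iff]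
  exact hsub

lemma UEquiv.of_succ {γ : ℕ → Path x y} {N : ℕ} (h : ∀ k < N, UEquiv 𝒰 (γ k) (γ (k + 1))) :
    UEquiv 𝒰 (γ 0) (γ N) := by
  induction N with
  | zero => exact .refl
  | succ N ih => exact (ih fun k hk => h k (hk.trans N.lt_succ_self)).trans (h N N.lt_succ_self)

end Paths

namespace Path.Homotopy

variable {Y : Type*} [TopologicalSpace Y] {𝒰 : Set (Set Y)} {x y : Y} {a b : Path x y}

noncomputable def stairPath (H : a.Homotopy b) (φ : C(ℝ, ℝ)) : Path x y where
  toFun t := H (projI (φ (3 * t - 1)), padTime t)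
  continuous_toFun := by unfold padTime; fun_prop
  source' := by simp only [padTime_zero, H.source]
  target' := by simp only [padTime_one, H.target]

lemma stairPath_congr (H : a.Homotopy b) {φ ψ : C(ℝ, ℝ)} (h : EqOn φ ψ (Icc 0 1)) :
    H.stairPath φ = H.stairPath ψ := by
  ext t
  change H (projI (φ (3 * t - 1)), projI (3 * t - 1)) =
    H (projI (ψ (3 * t - 1)), projI (3 * t - 1))
  rcases le_total (3 * (t : ℝ) - 1) 0 with h₀ | h₀
  · rw [projIcc_eq_zero.2 h₀, H.source, H.source]
  rcases le_total 1 (3 * (t : ℝ) - 1) with h₁ | h₁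
  · rw [projIcc_eq_one.2 h₁, H.target, H.target]
  · rw [h ⟨h₀, h₁⟩]

lemma stairPath_const_zero (H : a.Homotopy b) :
    H.stairPath (.const ℝ 0) = a.reparam padTime continuous_padTime padTime_zero padTime_one := by
  ext t
  exact congr_arg (fun s => H (s, padTime t)) (projIcc_eq_zero.2 le_rfl) |>.trans
    (H.apply_zero _)

lemma stairPath_const_one (H : a.Homotopy b) :
    H.stairPath (.const ℝ 1) = b.reparam padTime continuous_padTime padTime_zero padTime_one := by
  ext t
  exact congr_arg (fun s => H (s, padTime t)) (projIcc_eq_one.2 le_rfl) |>.trans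
    (H.apply_one _)

lemma uContiguous_stairPath (H : a.Homotopy b) {φ ψ : C(ℝ, ℝ)} {α β : ℝ} (hα : -1 < α)
    (hαβ : α < β) (hβ : β < 2) (hφψ : EqOn φ ψ (Ioo α β)ᶜ) {U : Set Y} (hU : U ∈ 𝒰)
    (hφU : ∀ τ ∈ Icc α β, H (projI (φ τ), projI τ) ∈ U)
    (hψU : ∀ τ ∈ Icc α β, H (projI (ψ τ), projI τ) ∈ U) :
    UContiguous 𝒰 (H.stairPath φ) (H.stairPath ψ) := by
  set r : I := ⟨(α + 1) / 3, by constructor <;> linarith⟩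
  set s : I := ⟨(β + 1) / 3, by constructor <;> linarith⟩
  have hτ : ∀ t : I, 3 * (t : ℝ) - 1 ∈ Icc α β ↔ t ∈ Icc r s := fun t => by
    simp only [mem_Icc, ← Subtype.coe_le_coe, r, s]
    constructor <;> rintro ⟨h₁, h₂⟩ <;> constructor <;> linarith
  refine .of_eqOn_compl_Ioo (r := r) (s := s) (Subtype.coe_lt_coe.1 (by simp [r]; linarith))
    (Subtype.coe_lt_coe.1 (by simp [r, s]; linarith))
    (Subtype.coe_lt_coe.1 (by simp [s]; linarith)) (fun t ht => ?_) hU ?_ ?_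
  · have hτ' : 3 * (t : ℝ) - 1 ∉ Ioo α β := fun h => ht
      ⟨Subtype.coe_lt_coe.1 (by simp [r]; linarith [h.1]),
        Subtype.coe_lt_coe.1 (by simp [s]; linarith [h.2])⟩
    change H (projI (φ _), _) = H (projI (ψ _), _)
    rw [hφψ hτ']
  · rintro _ ⟨t, ht, rfl⟩
    exact hφU _ ((hτ t).2 ht)
  · rintro _ ⟨t, ht, rfl⟩
    exact hψU _ ((hτ t).2 ht)

lemma uEquiv_stairPath_const (H : a.Homotopy b) {n : ℕ} (hn : 0 < n)
    (hball : ∀ z, ∃ U ∈ 𝒰, Metric.closedBall z (1 / n) ⊆ H ⁻¹' U) (i : ℕ) :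
    UEquiv 𝒰 (H.stairPath (.const ℝ (i / n))) (H.stairPath (.const ℝ (↑(i + 1) / n))) := by
  rw [← H.stairPath_congr (stairProfile_eqOn_zero n i),
    ← H.stairPath_congr (stairProfile_eqOn_top n i)]
  refine UEquiv.of_succ (γ := fun m => H.stairPath (stairProfile n i m)) fun m hm => .single ?_
  have hn' : (1 : ℝ) ≤ n := by exact_mod_cast hn
  have hm' : (m : ℝ) ≤ 2 * n := by exact_mod_cast Nat.lt_succ_iff.1 hm
  set α : ℝ := (m - 1) / (2 * n)
  set β : ℝ := (m + 1) / (2 * n)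
  have hβα : β - α = 1 / n := by simp only [α, β]; field_simp; ring
  obtain ⟨U, hU, hUsub⟩ := hball (projI (i / n), projI α)
  have hmem (k : ℕ) (τ : ℝ) (hτ : τ ∈ Icc α β) :
      H (projI (stairProfile n i k τ), projI τ) ∈ U := by
    refine hUsub <| Metric.mem_closedBall.2 <| Prod.dist_eq.trans_le <| max_le
      ((dist_projIcc_le _ _).trans (abs_stairProfile_sub_le n i k τ))
      ((dist_projIcc_le _ _).trans ?_)
    rw [abs_of_nonneg (by linarith [hτ.1])]
    linarith [hτ.2]
  refine H.uContiguous_stairPath ?_ ?_ ?_ (stairProfile_eqOn_succ hn i m) hU (hmem m)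
    (hmem (m + 1))
  · rw [lt_div_iff₀ (by positivity)]
    linarith [(Nat.cast_nonneg m : (0 : ℝ) ≤ m)]
  · linarith [one_div_pos.2 (by linarith : (0 : ℝ) < n)]
  · rw [div_lt_iff₀ (by positivity)]
    linarith

end Path.Homotopy

/-- If two paths with the same endpoints are homotopic relative to their endpoints, then they
are `𝒰`-equivalent for any open cover `𝒰` of the space. -/
theorem homotopic_implies_uequiv {Y : Type*} [TopologicalSpace Y] (𝒰 : Set (Set Y))
    (hopen : ∀ U ∈ 𝒰, IsOpen U) (hcover : ⋃₀ 𝒰 = Set.univ)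
    {x y : Y} (a b : Path x y) (hab : a.Homotopic b) :
    UEquiv 𝒰 a b := by
  obtain ⟨H⟩ := hab
  obtain ⟨n, hn, hball⟩ := exists_pos_nat_closedBall_subset_preimage H.continuous hopen hcover
  have hchain : UEquiv 𝒰 (H.stairPath (.const ℝ 0)) (H.stairPath (.const ℝ 1)) := by
    simpa [hn.ne'] using UEquiv.of_succ (γ := fun i : ℕ => H.stairPath (.const ℝ (i / n)))
      (N := n) fun i _ => H.uEquiv_stairPath_const hn hball i
  rw [H.stairPath_const_zero, H.stairPath_const_one] at hchain
  have hpad (γ : Path x y) := UContiguous.of_isReparamOf hopen hcover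
    (γ.isReparamOf_reparam continuous_padTime monotone_padTime padTime_zero padTime_one)
  exact .head (hpad a) (hchain.tail (hpad b).symm)
end

section
/- Let Y be a topological space and let 𝒰 be an open cover of Y such that whenever two members of 𝒰 have non-empty intersection, their union is contained in some simply connected subset of Y. If a and a' are paths in Y with the same endpoints, the image of a is contained in some member U of 𝒰, and the image of a' is contained in some member U' of 𝒰, then a and a' are homotopic relative to their endpoints. -/
namespace Path

variable {X : Type*} [TopologicalSpace X] {x y : X} {s : Set X}

def codRestrict (γ : Path x y) (hγ : Set.range γ ⊆ s) :
    Path (⟨x, hγ ⟨0, γ.source⟩⟩ : s) ⟨y, hγ ⟨1, γ.target⟩⟩ where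
  toFun t := ⟨γ t, hγ ⟨t, rfl⟩⟩
  continuous_toFun := by fun_prop
  source' := by simp
  target' := by simp

theorem map_subtypeVal_codRestrict (γ : Path x y) (hγ : Set.range γ ⊆ s) :
    (γ.codRestrict hγ).map continuous_subtype_val = γ := by
  ext
  rfl

theorem homotopic_of_range_subset [SimplyConnectedSpace s] {p q : Path x y}
    (hp : Set.range p ⊆ s) (hq : Set.range q ⊆ s) : p.Homotopic q := by
  have h := (SimplyConnectedSpace.paths_homotopic (p.codRestrict hp) (q.codRestrict hq)).map
    ⟨Subtype.val, continuous_subtype_val⟩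
  rwa [map_subtypeVal_codRestrict, map_subtypeVal_codRestrict] at h

end Path

theorem homotopic_of_small_general {Y : Type*} [TopologicalSpace Y] (𝒰 : Set (Set Y))
    (hU : ∀ U ∈ 𝒰, ∀ V ∈ 𝒰, (U ∩ V).Nonempty →
      ∃ S : Set Y, U ∪ V ⊆ S ∧ SimplyConnectedSpace S)
    {x y : Y} (a a' : Path x y) (U U' : Set Y) (hUmem : U ∈ 𝒰) (hU'mem : U' ∈ 𝒰)
    (ha : Set.range a ⊆ U) (ha' : Set.range a' ⊆ U') :
    a.Homotopic a' := by
  obtain ⟨S, hUU'S, hS⟩ :=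
    hU U hUmem U' hU'mem ⟨x, ha ⟨0, a.source⟩, ha' ⟨0, a'.source⟩⟩
  exact Path.homotopic_of_range_subset
    (ha.trans (Set.subset_union_left.trans hUU'S))
    (ha'.trans (Set.subset_union_right.trans hUU'S))

/-- Let `𝒰` be an open cover of `Y` such that whenever two members of `𝒰` meet, their union is
contained in some simply connected subset of `Y`. If `a` and `a'` are paths with the same
endpoints whose images are contained in members `U` and `U'` of `𝒰` respectively, then `a` and
`a'` are homotopic relative to their endpoints. -/
theorem homotopic_of_small {Y : Type*} [TopologicalSpace Y] (𝒰 : Set (Set Y))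
    (hopen : ∀ U ∈ 𝒰, IsOpen U) (hcover : ⋃₀ 𝒰 = Set.univ)
    (hU : ∀ U ∈ 𝒰, ∀ V ∈ 𝒰, (U ∩ V).Nonempty →
      ∃ S : Set Y, U ∪ V ⊆ S ∧ SimplyConnectedSpace S)
    {x y : Y} (a a' : Path x y) (U U' : Set Y) (hUmem : U ∈ 𝒰) (hU'mem : U' ∈ 𝒰)
    (ha : Set.range a ⊆ U) (ha' : Set.range a' ⊆ U') :
    a.Homotopic a' :=
  homotopic_of_small_general 𝒰 hU a a' U U' hUmem hU'mem ha ha'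
end

section
/- Let Y be a second countable, completely regular Hausdorff (Tychonoff) topological space which is locally simply connected. Then there exists an open cover 𝒰 of Y such that each member of 𝒰 is path-connected and, whenever two members of 𝒰 have non-empty intersection, their union is contained in some simply connected subset of Y. -/
/-!
Metrize `Y` (it is regular and second countable). Around each `x` pick a simply connected open
`V x`, a radius `r x` with `ball x (3 * r x) ⊆ V x`, and a simply connected open
`U x ⊆ ball x (r x)`. If `U a` meets `U b` and `r b ≤ r a`, the triangle inequality puts
`U a ∪ U b` inside `ball a (3 * r a) ⊆ V a`.
-/

open Set Metric Topology TopologicalSpace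

theorem Metric.ball_union_ball_subset_ball_three_mul {X : Type*} [PseudoMetricSpace X]
    {a b : X} {ra rb : ℝ} (hrab : rb ≤ ra) (hne : (ball a ra ∩ ball b rb).Nonempty) :
    ball a ra ∪ ball b rb ⊆ ball a (3 * ra) := by
  obtain ⟨w, hwa, hwb⟩ := hne
  rintro z (hz | hz) <;> rw [mem_ball] at *
  · linarith [dist_nonneg (x := w) (y := a)]
  · calc dist z a ≤ dist z b + dist b w + dist w a := dist_triangle4 z b w a
      _ = dist z b + dist w b + dist w a := by rw [dist_comm b w]
      _ < 3 * ra := by linarith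

theorem exists_open_cover_pairwise_union_subset {X : Type*} [TopologicalSpace X]
    [PseudoMetrizableSpace X] (P Q : Set X → Prop)
    (hP : ∀ O : Set X, IsOpen O → ∀ x ∈ O, ∃ U : Set X, IsOpen U ∧ x ∈ U ∧ U ⊆ O ∧ P U)
    (hQ : ∀ x : X, ∃ V ∈ 𝓝 x, Q V) :
    ∃ 𝒰 : Set (Set X), (∀ U ∈ 𝒰, IsOpen U ∧ P U) ∧ ⋃₀ 𝒰 = univ ∧
      ∀ U ∈ 𝒰, ∀ V ∈ 𝒰, (U ∩ V).Nonempty → ∃ S : Set X, U ∪ V ⊆ S ∧ Q S := by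
  let := pseudoMetrizableSpacePseudoMetric X
  choose V hV hQV using hQ
  have hr : ∀ x, ∃ r > 0, ball x (3 * r) ⊆ V x := fun x => by
    obtain ⟨ε, hε, hball⟩ := Metric.mem_nhds_iff.mp (hV x)
    exact ⟨ε / 3, by positivity, by rwa [mul_div_cancel₀ ε three_ne_zero]⟩
  choose r hr_pos hrV using hr
  choose U hUo hxU hUr hPU using fun x => hP _ isOpen_ball x (mem_ball_self (hr_pos x))
  have hunion_subset : ∀ a b, r b ≤ r a → (U a ∩ U b).Nonempty → U a ∪ U b ⊆ V a :=
    fun a b hab hne =>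
      calc U a ∪ U b ⊆ ball a (r a) ∪ ball b (r b) := union_subset_union (hUr a) (hUr b)
        _ ⊆ ball a (3 * r a) := ball_union_ball_subset_ball_three_mul hab
              (hne.mono (inter_subset_inter (hUr a) (hUr b)))
        _ ⊆ V a := hrV a
  refine ⟨range U, forall_mem_range.2 fun x => ⟨hUo x, hPU x⟩,
    eq_univ_of_forall fun x => ⟨U x, mem_range_self x, hxU x⟩, ?_⟩
  rintro _ ⟨a, rfl⟩ _ ⟨b, rfl⟩ hne
  rcases le_total (r b) (r a) with hab | hba
  · exact ⟨V a, hunion_subset a b hab hne, hQV a⟩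
  · rw [union_comm]
    exact ⟨V b, hunion_subset b a hba (inter_comm (U a) (U b) ▸ hne), hQV b⟩

theorem exists_good_cover_general {Y : Type*} [TopologicalSpace Y]
    [SecondCountableTopology Y] [CompletelyRegularSpace Y]
    (hloc : ∀ O : Set Y, IsOpen O → ∀ x ∈ O,
      ∃ V : Set Y, IsOpen V ∧ x ∈ V ∧ V ⊆ O ∧ SimplyConnectedSpace V) :
    ∃ 𝒰 : Set (Set Y),
      (∀ U ∈ 𝒰, IsOpen U) ∧ ⋃₀ 𝒰 = Set.univ ∧
      (∀ U ∈ 𝒰, IsPathConnected U) ∧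
      (∀ U ∈ 𝒰, ∀ V ∈ 𝒰, (U ∩ V).Nonempty →
        ∃ S : Set Y, U ∪ V ⊆ S ∧ SimplyConnectedSpace S) := by
  have hnhds : ∀ x : Y, ∃ V ∈ 𝓝 x, SimplyConnectedSpace V := fun x => by
    obtain ⟨V, hVo, hxV, -, hV⟩ := hloc univ isOpen_univ x (mem_univ x)
    exact ⟨V, hVo.mem_nhds hxV, hV⟩
  obtain ⟨𝒰, h𝒰, hcover, hunion⟩ :=
    exists_open_cover_pairwise_union_subset _ _ hloc hnhds
  refine ⟨𝒰, fun U hU => (h𝒰 U hU).1, hcover, fun U hU => ?_, hunion⟩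
  have := (h𝒰 U hU).2
  exact isPathConnected_iff_pathConnectedSpace.mpr inferInstance

/-- Let `Y` be a second countable, completely regular Hausdorff (Tychonoff) space which is
locally simply connected. Then there is an open cover `𝒰` of `Y` such that each member of `𝒰`
is path-connected and, whenever two members of `𝒰` have non-empty intersection, their union is
contained in some simply connected subset of `Y`. -/
theorem exists_good_cover {Y : Type*} [TopologicalSpace Y]
    [SecondCountableTopology Y] [CompletelyRegularSpace Y] [T2Space Y]
    (hloc : ∀ O : Set Y, IsOpen O → ∀ x ∈ O,
      ∃ V : Set Y, IsOpen V ∧ x ∈ V ∧ V ⊆ O ∧ SimplyConnectedSpace V) :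
    ∃ 𝒰 : Set (Set Y),
      (∀ U ∈ 𝒰, IsOpen U) ∧ ⋃₀ 𝒰 = Set.univ ∧
      (∀ U ∈ 𝒰, IsPathConnected U) ∧
      (∀ U ∈ 𝒰, ∀ V ∈ 𝒰, (U ∩ V).Nonempty →
        ∃ S : Set Y, U ∪ V ⊆ S ∧ SimplyConnectedSpace S) :=
  exists_good_cover_general hloc
end

section
/- Let G be a compact Hausdorff topological group and let A, B be closed subgroups of G such that every element of A commutes with every element of B, G = AB, and A ∩ B is finite. Then the multiplication map m : A × B → G, m(a,b) = ab, is a covering map. -/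
/-!
Multiplication is a continuous surjective homomorphism `A × B →* G` whose kernel
`{(c, c⁻¹) : c ∈ A ∩ B}` is finite. Since `A × B` is compact and `G` Hausdorff it is a closed,
hence quotient, map, and a quotient homomorphism of topological groups with discrete kernel is a
covering map.
-/

open Function Topology

theorem MonoidHom.isCoveringMap_of_finite_ker {E X : Type*} [Group E] [TopologicalSpace E]
    [IsTopologicalGroup E] [CompactSpace E] [T1Space E] [Group X] [TopologicalSpace X]
    [T2Space X] (φ : E →* X) (hφ : Continuous φ) (hsurj : Surjective φ)
    (hker : (φ.ker : Set E).Finite) : IsCoveringMap φ :=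
  ((hφ.isClosedMap.isQuotientMap hφ hsurj).isQuotientCoveringMap_of_isDiscrete_ker_monoidHom
    hker.isDiscrete).isCoveringMap

theorem Subgroup.finite_ker_noncommCoprod_subtype {G : Type*} [Group G] (A B : Subgroup G)
    (comm : ∀ (a : A) (b : B), Commute (a : G) b)
    (hfin : ((A ⊓ B : Subgroup G) : Set G).Finite) :
    ((A.subtype.noncommCoprod B.subtype comm).ker : Set (A × B)).Finite := by
  have inv_of_mem_ker {p : A × B} (hp : p ∈ (A.subtype.noncommCoprod B.subtype comm).ker) :
      (p.2 : G) = (p.1 : G)⁻¹ :=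
    eq_inv_of_mul_eq_one_right hp
  refine Set.Finite.of_injOn (f := fun p : A × B => (p.1 : G)) (fun p hp => ?_) ?_ hfin
  · exact ⟨p.1.2, by simpa [inv_of_mem_ker hp] using p.2.2⟩
  · intro p hp q hq (h : (p.1 : G) = q.1)
    exact Prod.ext (Subtype.ext h) (Subtype.ext <| by rw [inv_of_mem_ker hp, inv_of_mem_ker hq, h])

/-- Let `G` be a compact Hausdorff topological group and `A`, `B` closed subgroups such that
every element of `A` commutes with every element of `B`, `G = AB`, and `A ∩ B` is finite.
Then the multiplication map `A × B → G`, `(a, b) ↦ a * b`, is a covering map (in particular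
it is a continuous surjection with evenly covered neighbourhoods). -/
theorem mul_isCoveringMap_of_almostDirectProduct {G : Type*} [Group G] [TopologicalSpace G]
    [IsTopologicalGroup G] [CompactSpace G] [T2Space G]
    (A B : Subgroup G) (hA : IsClosed (A : Set G)) (hB : IsClosed (B : Set G))
    (hcomm : ∀ a ∈ A, ∀ b ∈ B, a * b = b * a)
    (hAB : ∀ g : G, ∃ a ∈ A, ∃ b ∈ B, g = a * b)
    (hfin : ((A ⊓ B : Subgroup G) : Set G).Finite) :
    Function.Surjective (fun p : A × B => (p.1 : G) * (p.2 : G)) ∧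
    IsCoveringMap (fun p : A × B => (p.1 : G) * (p.2 : G)) := by
  have : CompactSpace A := isCompact_iff_compactSpace.mp hA.isCompact
  have : CompactSpace B := isCompact_iff_compactSpace.mp hB.isCompact
  have comm : ∀ (a : A) (b : B), Commute (a : G) b := fun a b => hcomm a a.2 b b.2
  let φ := A.subtype.noncommCoprod B.subtype comm
  have hsurj : Surjective φ := fun g =>
    let ⟨a, ha, b, hb, hg⟩ := hAB g
    ⟨(⟨a, ha⟩, ⟨b, hb⟩), hg.symm⟩
  have hφ : Continuous φ := by
    change Continuous fun p : A × B => (p.1 : G) * (p.2 : G)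
    fun_prop
  exact ⟨hsurj, φ.isCoveringMap_of_finite_ker hφ hsurj
    (A.finite_ker_noncommCoprod_subtype B comm hfin)⟩
end

section
/- Let G and G' be compact Hausdorff topological groups. Let A, B be closed subgroups of G such that every element of A commutes with every element of B, G = AB, and Γ := A ∩ B is finite; let A', B' be closed subgroups of G' such that every element of A' commutes with every element of B', G' = A'B', and Γ' := A' ∩ B' is finite. Suppose there are: a group isomorphism f^Γ : Γ → Γ'; a Γ-equivariant homotopy equivalence f^A : A → A' (with respect to the subgroups Γ ≤ A and Γ' ≤ A'); and a Γ-equivariant homotopy equivalence f^B : B → B' (with respect to the subgroups Γ ≤ B and Γ' ≤ B'), such that the restrictions of f^A and f^B to Γ both equal f^Γ. Then there is a Γ-equivariant homotopy equivalence f^G : G → G' (with respect to Γ ≤ G and Γ' ≤ G') such that f^G(ab) = f^A(a)·f^B(b) for all a ∈ A and b ∈ B; in particular f^G restricted to A equals f^A and f^G restricted to B equals f^B. -/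
open unitInterval

/-- `f : G → G'` is a `Γ`-equivariant homotopy equivalence with specified homotopy inverse
`f' : G' → G` (with respect to the subgroups `Γ ≤ G` and `Γ' ≤ G'`). -/
def IsEquivariantHtpyEquivWith {G G' : Type*} [Group G] [TopologicalSpace G]
    [Group G'] [TopologicalSpace G'] (Γ : Subgroup G) (Γ' : Subgroup G')
    (f : G → G') (f' : G' → G) : Prop :=
  Continuous f ∧ Continuous f' ∧
  -- `f` restricted to `Γ` is a group isomorphism onto `Γ'` (it is multiplicative by the
  -- condition `f (c * x) = f c * f x` below, and bijective onto `Γ'`):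
  Set.BijOn f (Γ : Set G) (Γ' : Set G') ∧
  f 1 = 1 ∧ (∀ c ∈ Γ, ∀ x : G, f (c * x) = f c * f x) ∧
  f' 1 = 1 ∧ (∀ c' ∈ Γ', ∀ x' : G', f' (c' * x') = f' c' * f' x') ∧
  -- a homotopy from the identity of `G` to `f' ∘ f`, fixing `Γ` and `Γ`-equivariant:
  (∃ h : C(I × G, G),
    (∀ x : G, h (0, x) = x) ∧ (∀ x : G, h (1, x) = f' (f x)) ∧
    (∀ t : I, ∀ c ∈ Γ, h (t, c) = c) ∧
    (∀ t : I, ∀ c ∈ Γ, ∀ x : G, h (t, c * x) = c * h (t, x))) ∧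
  -- a homotopy from the identity of `G'` to `f ∘ f'`, fixing `Γ'` and `Γ'`-equivariant:
  (∃ h' : C(I × G', G'),
    (∀ x' : G', h' (0, x') = x') ∧ (∀ x' : G', h' (1, x') = f (f' x')) ∧
    (∀ t : I, ∀ c' ∈ Γ', h' (t, c') = c') ∧
    (∀ t : I, ∀ c' ∈ Γ', ∀ x' : G', h' (t, c' * x') = c' * h' (t, x')))

/-- `f : G → G'` is a `Γ`-equivariant homotopy equivalence (with respect to the subgroups
`Γ ≤ G` and `Γ' ≤ G'`). -/
def IsEquivariantHtpyEquiv {G G' : Type*} [Group G] [TopologicalSpace G]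
    [Group G'] [TopologicalSpace G'] (Γ : Subgroup G) (Γ' : Subgroup G')
    (f : G → G') : Prop :=
  ∃ f' : G' → G, IsEquivariantHtpyEquivWith Γ Γ' f f'


/-!
If `a * b = a₁ * b₁` with `a, a₁ ∈ A` and `b, b₁ ∈ B`, then `a = c * a₁` and `b₁ = c * b` for some
`c ∈ Γ = A ⊓ B`. Hence maps `φ` on `A` and `ψ` on `B` that are multiplicative for left
multiplication by `Γ` and agree on `Γ` descend to `a * b ↦ φ a * ψ b` on `G`. Multiplication
`A × B → G` is a continuous surjection from a compact space onto a Hausdorff one, so it is a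
quotient map and continuity descends as well. Gluing `f^A, f^B`, their homotopy inverses, and
(slicewise in `t`) the two pairs of homotopies produces `f^G`, its homotopy inverse and the
homotopies; every required identity is then checked on products `a * b`.
-/

open Function Topology

def IsEquivariantHomotopyFromId {G : Type*} [Group G] [TopologicalSpace G] (Γ : Subgroup G)
    (u : G → G) (H : C(I × G, G)) : Prop :=
  (∀ x, H (0, x) = x) ∧ (∀ x, H (1, x) = u x) ∧ (∀ t, ∀ c ∈ Γ, H (t, c) = c) ∧
    ∀ t, ∀ c ∈ Γ, ∀ x, H (t, c * x) = c * H (t, x)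

section Gluing

variable {G G' : Type*} [Group G] [Group G'] {A B : Subgroup G} {A' B' : Subgroup G'}

structure IsGluable (φ : A → A') (ψ : B → B') : Prop where
  map_mul_of_mem_left : ∀ c ∈ (A ⊓ B).subgroupOf A, ∀ x, φ (c * x) = φ c * φ x
  map_mul_of_mem_right : ∀ c ∈ (A ⊓ B).subgroupOf B, ∀ x, ψ (c * x) = ψ c * ψ x
  eq_of_mem_inf : ∀ c (hcA : c ∈ A) (hcB : c ∈ B), (φ ⟨c, hcA⟩ : G') = ψ ⟨c, hcB⟩

theorem Set.BijOn.of_subgroupOf {H K : Subgroup G} {H' K' : Subgroup G'} (hHK : H ≤ K)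
    (hH'K' : H' ≤ K') {φ : K → K'} (hφ : Set.BijOn φ (H.subgroupOf K) (H'.subgroupOf K'))
    {F : G → G'} (hF : ∀ x : K, F x = φ x) : Set.BijOn F H H' := by
  refine ⟨fun c hc => ?_, fun c hc d hd hcd => ?_, fun c' hc' => ?_⟩
  · rw [hF ⟨c, hHK hc⟩]
    exact hφ.mapsTo (show ⟨c, hHK hc⟩ ∈ H.subgroupOf K from hc)
  · rw [hF ⟨c, hHK hc⟩, hF ⟨d, hHK hd⟩] at hcd
    exact congrArg Subtype.val (hφ.injOn (x₁ := ⟨c, hHK hc⟩) (x₂ := ⟨d, hHK hd⟩) hc hd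
      (Subtype.ext hcd))
  · obtain ⟨x, hx, hφx⟩ := hφ.surjOn (show ⟨c', hH'K' hc'⟩ ∈ H'.subgroupOf K' from hc')
    exact ⟨x, hx, by rw [hF, hφx]⟩

theorem surjective_mul_of_forall_eq_mul (hAB : ∀ g : G, ∃ a ∈ A, ∃ b ∈ B, g = a * b) :
    Surjective fun p : A × B => (p.1 : G) * p.2 := fun g => by
  obtain ⟨a, ha, b, hb, rfl⟩ := hAB g
  exact ⟨(⟨a, ha⟩, ⟨b, hb⟩), rfl⟩

namespace IsGluable

variable {φ : A → A'} {ψ : B → B'}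

theorem map_one_left (h : IsGluable φ ψ) : φ 1 = 1 := by
  simpa using h.map_mul_of_mem_left 1 (one_mem _) 1

theorem map_one_right (h : IsGluable φ ψ) : ψ 1 = 1 := by
  simpa using h.map_mul_of_mem_right 1 (one_mem _) 1

/-- If `a * b = a₁ * b₁`, then `c := a₁⁻¹ * a = b₁ * b⁻¹` lies in `A ⊓ B`, `a = c * a₁` and
`b₁ = c * b`; the factor `φ c = ψ c` lies in `B'`, so it commutes past `φ a₁`. -/
theorem factorsThrough (hcomm : ∀ a ∈ A, ∀ b ∈ B, a * b = b * a)
    (hcomm' : ∀ a ∈ A', ∀ b ∈ B', a * b = b * a) (h : IsGluable φ ψ) :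
    FactorsThrough (fun p : A × B => (φ p.1 : G') * ψ p.2) (fun p : A × B => (p.1 : G) * p.2) := by
  rintro ⟨a, b⟩ ⟨a₁, b₁⟩ (hab : (a : G) * b = a₁ * b₁)
  obtain ⟨c, hcA, hcB, ha, hb⟩ :
      ∃ (c : G) (hcA : c ∈ A) (hcB : c ∈ B), a = ⟨c, hcA⟩ * a₁ ∧ b₁ = ⟨c, hcB⟩ * b := by
    have hcB : (a₁ : G)⁻¹ * a ∈ B := by
      rw [show (a₁ : G)⁻¹ * a = b₁ * (b : G)⁻¹ by
        rw [inv_mul_eq_iff_eq_mul, ← mul_assoc, ← hab]; group]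
      exact B.mul_mem b₁.2 (B.inv_mem b.2)
    refine ⟨_, A.mul_mem (A.inv_mem a₁.2) a.2, hcB, Subtype.ext ?_, Subtype.ext ?_⟩
    · simp [← hcomm _ a₁.2 _ hcB]
    · simp [mul_assoc, hab]
  subst ha hb
  dsimp only
  have hφc : (φ ⟨c, hcA⟩ : G') ∈ B' := h.eq_of_mem_inf c hcA hcB ▸ (ψ ⟨c, hcB⟩).2
  rw [h.map_mul_of_mem_left ⟨c, hcA⟩ ⟨hcA, hcB⟩, h.map_mul_of_mem_right ⟨c, hcB⟩ ⟨hcA, hcB⟩,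
    Subgroup.coe_mul, Subgroup.coe_mul, ← h.eq_of_mem_inf c hcA hcB,
    ← hcomm' _ (φ a₁).2 _ hφc, mul_assoc]

theorem apply_of_mem_left (h : IsGluable φ ψ) {F : G → G'}
    (hF : ∀ (a : A) (b : B), F (a * b) = φ a * ψ b) (a : A) : F a = φ a := by
  simpa [h.map_one_right] using hF a 1

theorem apply_of_mem_right (h : IsGluable φ ψ) {F : G → G'}
    (hF : ∀ (a : A) (b : B), F (a * b) = φ a * ψ b) (b : B) : F b = ψ b := by
  simpa [h.map_one_left] using hF 1 b

theorem apply_mul_of_mem_inf (h : IsGluable φ ψ)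
    (hμ : Surjective fun p : A × B => (p.1 : G) * p.2) {F : G → G'}
    (hF : ∀ (a : A) (b : B), F (a * b) = φ a * ψ b) :
    ∀ c ∈ A ⊓ B, ∀ x, F (c * x) = F c * F x := by
  intro c hc x
  obtain ⟨⟨a, b⟩, rfl⟩ := hμ x
  have hca := hF (⟨c, hc.1⟩ * a) b
  rw [Subgroup.coe_mul, mul_assoc] at hca
  rw [hca, h.map_mul_of_mem_left _ hc, hF, h.apply_of_mem_left hF ⟨c, hc.1⟩, Subgroup.coe_mul,
    mul_assoc]

end IsGluable

variable [TopologicalSpace G] [TopologicalSpace G'] {fA : A → A'} {fA' : A' → A} {fB : B → B'}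
  {fB' : B' → B}

namespace IsEquivariantHtpyEquivWith

theorem inv_apply_apply_of_mem {Γ : Subgroup G} {Γ' : Subgroup G'} {f : G → G'} {f' : G' → G}
    (h : IsEquivariantHtpyEquivWith Γ Γ' f f') {c : G} (hc : c ∈ Γ) : f' (f c) = c := by
  obtain ⟨-, -, -, -, -, -, -, ⟨H, -, hH1, hHfix, -⟩, -⟩ := h
  rw [← hH1, hHfix 1 c hc]

theorem inv_eq_of_mem_inf
    (hfA : IsEquivariantHtpyEquivWith ((A ⊓ B).subgroupOf A) ((A' ⊓ B').subgroupOf A') fA fA')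
    (hfB : IsEquivariantHtpyEquivWith ((A ⊓ B).subgroupOf B) ((A' ⊓ B').subgroupOf B') fB fB')
    (hagree : ∀ c (hcA : c ∈ A) (hcB : c ∈ B), (fA ⟨c, hcA⟩ : G') = fB ⟨c, hcB⟩)
    (c' : G') (hcA' : c' ∈ A') (hcB' : c' ∈ B') : (fA' ⟨c', hcA'⟩ : G) = fB' ⟨c', hcB'⟩ := by
  obtain ⟨x, hx, hfAx⟩ :=
    hfA.2.2.1.surjOn (show (⟨c', hcA'⟩ : A') ∈ (A' ⊓ B').subgroupOf A' from ⟨hcA', hcB'⟩)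
  have hfBx : fB ⟨x, hx.2⟩ = ⟨c', hcB'⟩ :=
    Subtype.ext ((hagree x x.2 hx.2).symm.trans (congrArg Subtype.val hfAx))
  rw [← hfAx, ← hfBx, hfA.inv_apply_apply_of_mem hx, hfB.inv_apply_apply_of_mem hx]

end IsEquivariantHtpyEquivWith

namespace IsEquivariantHomotopyFromId

variable {uA : A → A} {uB : B → B} {HA : C(I × A, A)} {HB : C(I × B, B)}

theorem isGluable (hHA : IsEquivariantHomotopyFromId ((A ⊓ B).subgroupOf A) uA HA)
    (hHB : IsEquivariantHomotopyFromId ((A ⊓ B).subgroupOf B) uB HB) (t : I) :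
    IsGluable (fun a => HA (t, a)) (fun b => HB (t, b)) := by
  obtain ⟨-, -, hAfix, hAmul⟩ := hHA
  obtain ⟨-, -, hBfix, hBmul⟩ := hHB
  refine ⟨fun c hc x => ?_, fun c hc x => ?_, fun c hcA hcB => ?_⟩
  · rw [hAmul t c hc x, hAfix t c hc]
  · rw [hBmul t c hc x, hBfix t c hc]
  · rw [hAfix t _ ⟨hcA, hcB⟩, hBfix t _ ⟨hcA, hcB⟩]

theorem glue (hμ : Surjective fun p : A × B => (p.1 : G) * p.2)
    (hHA : IsEquivariantHomotopyFromId ((A ⊓ B).subgroupOf A) uA HA)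
    (hHB : IsEquivariantHomotopyFromId ((A ⊓ B).subgroupOf B) uB HB) {H : C(I × G, G)}
    (hH : ∀ t (a : A) (b : B), H (t, a * b) = HA (t, a) * HB (t, b)) {u : G → G}
    (hu : ∀ (a : A) (b : B), u (a * b) = uA a * uB b) :
    IsEquivariantHomotopyFromId (A ⊓ B) u H := by
  have hg := hHA.isGluable hHB
  obtain ⟨hA0, hA1, hAfix, -⟩ := hHA
  obtain ⟨hB0, hB1, -, -⟩ := hHB
  have hfix : ∀ t, ∀ c ∈ A ⊓ B, H (t, c) = c := fun t c hc => by
    rw [(hg t).apply_of_mem_left (F := fun x => H (t, x)) (hH t) ⟨c, hc.1⟩, hAfix t _ hc]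
  refine ⟨fun x => ?_, fun x => ?_, hfix, fun t c hc x => ?_⟩
  · obtain ⟨⟨a, b⟩, rfl⟩ := hμ x
    rw [hH, hA0, hB0]
  · obtain ⟨⟨a, b⟩, rfl⟩ := hμ x
    rw [hH, hA1, hB1, hu]
  · rw [(hg t).apply_mul_of_mem_inf hμ (F := fun x => H (t, x)) (hH t) c hc x, hfix t c hc]

end IsEquivariantHomotopyFromId

variable [IsTopologicalGroup G] [CompactSpace G] [T2Space G] [IsTopologicalGroup G']

theorem exists_continuousMap_glue (hA : IsClosed (A : Set G)) (hB : IsClosed (B : Set G))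
    (hμ : Surjective fun p : A × B => (p.1 : G) * p.2)
    (hcomm : ∀ a ∈ A, ∀ b ∈ B, a * b = b * a) (hcomm' : ∀ a ∈ A', ∀ b ∈ B', a * b = b * a)
    {φ : A → A'} {ψ : B → B'} (hφ : Continuous φ) (hψ : Continuous ψ) (h : IsGluable φ ψ) :
    ∃ F : C(G, G'), ∀ (a : A) (b : B), F (a * b) = φ a * ψ b := by
  have : CompactSpace A := isCompact_iff_compactSpace.mp hA.isCompact
  have : CompactSpace B := isCompact_iff_compactSpace.mp hB.isCompact
  let μ : C(A × B, G) := ⟨fun p => (p.1 : G) * p.2, by fun_prop⟩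
  have hq : IsQuotientMap μ := .of_surjective_continuous hμ μ.continuous
  let g : C(A × B, G') := ⟨fun p => (φ p.1 : G') * ψ p.2, by fun_prop⟩
  have hg : FactorsThrough g μ := h.factorsThrough hcomm hcomm'
  exact ⟨hq.lift g hg, fun a b => DFunLike.congr_fun (hq.lift_comp g hg) (a, b)⟩

theorem exists_continuousMap_prod_glue {X : Type*} [TopologicalSpace X] [CompactSpace X]
    [T2Space X] (hA : IsClosed (A : Set G)) (hB : IsClosed (B : Set G))
    (hμ : Surjective fun p : A × B => (p.1 : G) * p.2)
    (hcomm : ∀ a ∈ A, ∀ b ∈ B, a * b = b * a) (hcomm' : ∀ a ∈ A', ∀ b ∈ B', a * b = b * a)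
    (φ : C(X × A, A')) (ψ : C(X × B, B'))
    (h : ∀ x, IsGluable (fun a => φ (x, a)) (fun b => ψ (x, b))) :
    ∃ F : C(X × G, G'), ∀ x (a : A) (b : B), F (x, a * b) = φ (x, a) * ψ (x, b) := by
  have : CompactSpace A := isCompact_iff_compactSpace.mp hA.isCompact
  have : CompactSpace B := isCompact_iff_compactSpace.mp hB.isCompact
  let μ : C(X × (A × B), X × G) := ⟨Prod.map id fun p => (p.1 : G) * p.2, by fun_prop⟩
  have hq : IsQuotientMap μ := .of_surjective_continuous (surjective_id.prodMap hμ) μ.continuous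
  let g : C(X × (A × B), G') := ⟨fun q => (φ (q.1, q.2.1) : G') * ψ (q.1, q.2.2), by fun_prop⟩
  have hg : FactorsThrough g μ := by
    rintro ⟨x, p⟩ ⟨y, p'⟩ hpp'
    obtain ⟨rfl, hp⟩ := Prod.ext_iff.mp hpp'
    exact (h x).factorsThrough hcomm hcomm' hp
  exact ⟨hq.lift g hg, fun x a b => DFunLike.congr_fun (hq.lift_comp g hg) (x, a, b)⟩

variable [CompactSpace G'] [T2Space G']

theorem IsEquivariantHtpyEquivWith.glue (hA : IsClosed (A : Set G)) (hB : IsClosed (B : Set G))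
    (hcomm : ∀ a ∈ A, ∀ b ∈ B, a * b = b * a) (hμ : Surjective fun p : A × B => (p.1 : G) * p.2)
    (hA' : IsClosed (A' : Set G')) (hB' : IsClosed (B' : Set G'))
    (hcomm' : ∀ a ∈ A', ∀ b ∈ B', a * b = b * a)
    (hμ' : Surjective fun p : A' × B' => (p.1 : G') * p.2)
    (hfA : IsEquivariantHtpyEquivWith ((A ⊓ B).subgroupOf A) ((A' ⊓ B').subgroupOf A') fA fA')
    (hfB : IsEquivariantHtpyEquivWith ((A ⊓ B).subgroupOf B) ((A' ⊓ B').subgroupOf B') fB fB')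
    (hagree : ∀ c (hcA : c ∈ A) (hcB : c ∈ B), (fA ⟨c, hcA⟩ : G') = fB ⟨c, hcB⟩) :
    ∃ (fG : G → G') (fG' : G' → G), IsEquivariantHtpyEquivWith (A ⊓ B) (A' ⊓ B') fG fG' ∧
      (∀ (a : A) (b : B), fG (a * b) = fA a * fB b) ∧ (∀ a : A, fG a = fA a) ∧
      ∀ b : B, fG b = fB b := by
  have hagree' := hfA.inv_eq_of_mem_inf hfB hagree
  obtain ⟨cA, cA', bijA, -, mulA, -, mulA', ⟨HA, hHA⟩, ⟨HA', hHA'⟩⟩ := hfA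
  obtain ⟨cB, cB', -, -, mulB, -, mulB', ⟨HB, hHB⟩, ⟨HB', hHB'⟩⟩ := hfB
  have hg : IsGluable fA fB := ⟨mulA, mulB, hagree⟩
  have hg' : IsGluable fA' fB' := ⟨mulA', mulB', hagree'⟩
  obtain ⟨F, hF⟩ := exists_continuousMap_glue hA hB hμ hcomm hcomm' cA cB hg
  obtain ⟨F', hF'⟩ := exists_continuousMap_glue hA' hB' hμ' hcomm' hcomm cA' cB' hg'
  obtain ⟨H, hH⟩ := exists_continuousMap_prod_glue hA hB hμ hcomm hcomm HA HB
    (IsEquivariantHomotopyFromId.isGluable hHA hHB)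
  obtain ⟨H', hH'⟩ := exists_continuousMap_prod_glue hA' hB' hμ' hcomm' hcomm' HA' HB'
    (IsEquivariantHomotopyFromId.isGluable hHA' hHB')
  refine ⟨F, F', ⟨F.continuous, F'.continuous,
    .of_subgroupOf inf_le_left inf_le_left bijA (hg.apply_of_mem_left hF),
    by simpa [hg.map_one_left] using hg.apply_of_mem_left hF 1, hg.apply_mul_of_mem_inf hμ hF,
    by simpa [hg'.map_one_left] using hg'.apply_of_mem_left hF' 1, hg'.apply_mul_of_mem_inf hμ' hF',
    ⟨H, IsEquivariantHomotopyFromId.glue hμ hHA hHB hH fun a b => by rw [hF, hF']⟩,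
    ⟨H', IsEquivariantHomotopyFromId.glue hμ' hHA' hHB' hH' fun a b => by rw [hF', hF]⟩⟩,
    hF, hg.apply_of_mem_left hF, hg.apply_of_mem_right hF⟩

end Gluing

theorem glue_equivariant_htpy_equiv_general {G G' : Type*}
    [Group G] [TopologicalSpace G] [IsTopologicalGroup G] [CompactSpace G] [T2Space G]
    [Group G'] [TopologicalSpace G'] [IsTopologicalGroup G'] [CompactSpace G'] [T2Space G']
    (A B : Subgroup G) (hA : IsClosed (A : Set G)) (hB : IsClosed (B : Set G))
    (hcomm : ∀ a ∈ A, ∀ b ∈ B, a * b = b * a)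
    (hAB : ∀ g : G, ∃ a ∈ A, ∃ b ∈ B, g = a * b)
    (A' B' : Subgroup G') (hA' : IsClosed (A' : Set G')) (hB' : IsClosed (B' : Set G'))
    (hcomm' : ∀ a ∈ A', ∀ b ∈ B', a * b = b * a)
    (hAB' : ∀ g : G', ∃ a ∈ A', ∃ b ∈ B', g = a * b)
    -- a group isomorphism `f^Γ : Γ → Γ'`:
    (fΓ : ↥(A ⊓ B) ≃* ↥(A' ⊓ B'))
    -- a `Γ`-equivariant homotopy equivalence `f^A : A → A'`:
    (fA : ↥A → ↥A')
    (hfA : IsEquivariantHtpyEquiv ((A ⊓ B).subgroupOf A) ((A' ⊓ B').subgroupOf A') fA)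
    -- a `Γ`-equivariant homotopy equivalence `f^B : B → B'`:
    (fB : ↥B → ↥B')
    (hfB : IsEquivariantHtpyEquiv ((A ⊓ B).subgroupOf B) ((A' ⊓ B').subgroupOf B') fB)
    -- the restrictions of `f^A` and `f^B` to `Γ` both equal `f^Γ`:
    (hresA : ∀ c : G, ∀ hc : c ∈ A ⊓ B, ((fA ⟨c, hc.1⟩ : ↥A') : G') = ((fΓ ⟨c, hc⟩ : ↥(A' ⊓ B')) : G'))
    (hresB : ∀ c : G, ∀ hc : c ∈ A ⊓ B, ((fB ⟨c, hc.2⟩ : ↥B') : G') = ((fΓ ⟨c, hc⟩ : ↥(A' ⊓ B')) : G')) :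
    ∃ fG : G → G', IsEquivariantHtpyEquiv (A ⊓ B) (A' ⊓ B') fG ∧
      (∀ a : G, ∀ ha : a ∈ A, ∀ b : G, ∀ hb : b ∈ B,
        fG (a * b) = ((fA ⟨a, ha⟩ : ↥A') : G') * ((fB ⟨b, hb⟩ : ↥B') : G')) ∧
      (∀ a : G, ∀ ha : a ∈ A, fG a = ((fA ⟨a, ha⟩ : ↥A') : G')) ∧
      (∀ b : G, ∀ hb : b ∈ B, fG b = ((fB ⟨b, hb⟩ : ↥B') : G')) := by
  obtain ⟨fA', hfA⟩ := hfA
  obtain ⟨fB', hfB⟩ := hfB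
  obtain ⟨fG, fG', hG, hmul, hleft, hright⟩ :=
    hfA.glue hA hB hcomm (surjective_mul_of_forall_eq_mul hAB) hA' hB' hcomm'
      (surjective_mul_of_forall_eq_mul hAB') hfB
      fun c hcA hcB => (hresA c ⟨hcA, hcB⟩).trans (hresB c ⟨hcA, hcB⟩).symm
  exact ⟨fG, ⟨fG', hG⟩, fun a ha b hb => hmul ⟨a, ha⟩ ⟨b, hb⟩, fun a ha => hleft ⟨a, ha⟩,
    fun b hb => hright ⟨b, hb⟩⟩

/-- Gluing `Γ`-equivariant homotopy equivalences along an almost direct product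
`G = A ×_Γ B`, `G' = A' ×_{Γ'} B'`. -/
theorem glue_equivariant_htpy_equiv {G G' : Type*}
    [Group G] [TopologicalSpace G] [IsTopologicalGroup G] [CompactSpace G] [T2Space G]
    [Group G'] [TopologicalSpace G'] [IsTopologicalGroup G'] [CompactSpace G'] [T2Space G']
    (A B : Subgroup G) (hA : IsClosed (A : Set G)) (hB : IsClosed (B : Set G))
    (hcomm : ∀ a ∈ A, ∀ b ∈ B, a * b = b * a)
    (hAB : ∀ g : G, ∃ a ∈ A, ∃ b ∈ B, g = a * b)
    (hfin : ((A ⊓ B : Subgroup G) : Set G).Finite)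
    (A' B' : Subgroup G') (hA' : IsClosed (A' : Set G')) (hB' : IsClosed (B' : Set G'))
    (hcomm' : ∀ a ∈ A', ∀ b ∈ B', a * b = b * a)
    (hAB' : ∀ g : G', ∃ a ∈ A', ∃ b ∈ B', g = a * b)
    (hfin' : ((A' ⊓ B' : Subgroup G') : Set G').Finite)
    -- a group isomorphism `f^Γ : Γ → Γ'`:
    (fΓ : ↥(A ⊓ B) ≃* ↥(A' ⊓ B'))
    -- a `Γ`-equivariant homotopy equivalence `f^A : A → A'`:
    (fA : ↥A → ↥A')
    (hfA : IsEquivariantHtpyEquiv ((A ⊓ B).subgroupOf A) ((A' ⊓ B').subgroupOf A') fA)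
    -- a `Γ`-equivariant homotopy equivalence `f^B : B → B'`:
    (fB : ↥B → ↥B')
    (hfB : IsEquivariantHtpyEquiv ((A ⊓ B).subgroupOf B) ((A' ⊓ B').subgroupOf B') fB)
    -- the restrictions of `f^A` and `f^B` to `Γ` both equal `f^Γ`:
    (hresA : ∀ c : G, ∀ hc : c ∈ A ⊓ B, ((fA ⟨c, hc.1⟩ : ↥A') : G') = ((fΓ ⟨c, hc⟩ : ↥(A' ⊓ B')) : G'))
    (hresB : ∀ c : G, ∀ hc : c ∈ A ⊓ B, ((fB ⟨c, hc.2⟩ : ↥B') : G') = ((fΓ ⟨c, hc⟩ : ↥(A' ⊓ B')) : G')) :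
    ∃ fG : G → G', IsEquivariantHtpyEquiv (A ⊓ B) (A' ⊓ B') fG ∧
      (∀ a : G, ∀ ha : a ∈ A, ∀ b : G, ∀ hb : b ∈ B,
        fG (a * b) = ((fA ⟨a, ha⟩ : ↥A') : G') * ((fB ⟨b, hb⟩ : ↥B') : G')) ∧
      (∀ a : G, ∀ ha : a ∈ A, fG a = ((fA ⟨a, ha⟩ : ↥A') : G')) ∧
      (∀ b : G, ∀ hb : b ∈ B, fG b = ((fB ⟨b, hb⟩ : ↥B') : G')) :=
  glue_equivariant_htpy_equiv_general A B hA hB hcomm hAB A' B' hA' hB' hcomm' hAB' fΓ fA hfA fB hfB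
    hresA hresB
end

section
/- Let G be a group and let A, B be subgroups of G such that every element of A commutes with every element of B and G = AB; let Γ = A ∩ B. Let N be a normal subgroup of G such that N = (A ∩ N)(B ∩ N), and let π : G → G/N be the quotient homomorphism. Then the map m : π(A) × π(B) → G/N, (x,y) ↦ xy, is a surjective group homomorphism whose kernel is exactly {(π(c), π(c)⁻¹) : c ∈ Γ}. -/
/-!
Since `A` and `B` commute elementwise, so do their images in `G ⧸ N`, and multiplication
`π(A) × π(B) → G ⧸ N` is a homomorphism; it is onto because `G = AB`. Its kernel consists of
the pairs `(x, x⁻¹)` with `x ∈ π(A) ∩ π(B)`, so everything comes down to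
`π(A) ∩ π(B) = π(A ∩ B)`. If `π a = π b` then `a⁻¹ b = a' b'` with `a' ∈ A ∩ N`, `b' ∈ B ∩ N`,
and `c = a a' = b b'⁻¹` lies in `A ∩ B` with `π c = π a`.
-/

namespace Subgroup

variable {G H : Type*} [Group G] [Group H] (A B : Subgroup G)

theorem commute_of_mem_map (f : G →* H) (hcomm : ∀ a ∈ A, ∀ b ∈ B, Commute a b) :
    ∀ x ∈ A.map f, ∀ y ∈ B.map f, Commute x y := by
  rintro _ ⟨a, ha, rfl⟩ _ ⟨b, hb, rfl⟩
  exact (hcomm a ha b hb).map f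

theorem surjective_mul_map {f : G →* H} (hf : Function.Surjective f)
    (hAB : ∀ g : G, ∃ a ∈ A, ∃ b ∈ B, g = a * b) :
    Function.Surjective fun p : A.map f × B.map f => (p.1 : H) * p.2 := by
  intro h
  obtain ⟨g, rfl⟩ := hf h
  obtain ⟨a, ha, b, hb, rfl⟩ := hAB g
  exact ⟨(⟨f a, a, ha, rfl⟩, ⟨f b, b, hb, rfl⟩), (map_mul f a b).symm⟩

theorem coe_mul_coe_eq_one_iff (x : A) (y : B) :
    (x : G) * y = 1 ↔ ∃ c ∈ A ⊓ B, (x : G) = c ∧ (y : G) = c⁻¹ := by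
  constructor
  · intro h
    have hyx : (y : G) = (x : G)⁻¹ := eq_inv_of_mul_eq_one_right h
    have hxB : (x : G) ∈ B := by simpa [hyx] using y.2
    exact ⟨x, ⟨x.2, hxB⟩, rfl, hyx⟩
  · rintro ⟨c, -, hx, hy⟩
    rw [hx, hy, mul_inv_cancel]

theorem map_inf_eq_of_forall_mem_ker_eq_mul (f : G →* H)
    (hker : ∀ n ∈ f.ker, ∃ a ∈ A ⊓ f.ker, ∃ b ∈ B ⊓ f.ker, n = a * b) :
    (A ⊓ B).map f = A.map f ⊓ B.map f := by
  refine le_antisymm (map_inf_le A B f) ?_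
  rintro _ ⟨⟨a, ha, rfl⟩, ⟨b, hb, hba⟩⟩
  have hmem : a⁻¹ * b ∈ f.ker := by simp [MonoidHom.mem_ker, hba]
  obtain ⟨a', ⟨ha'A, ha'K⟩, b', ⟨hb'B, hb'K⟩, hab⟩ := hker _ hmem
  have hc : a * a' = b * b'⁻¹ := by
    rw [eq_mul_inv_iff_mul_eq, mul_assoc, ← hab, mul_inv_cancel_left]
  refine ⟨a * a', ⟨A.mul_mem ha ha'A, hc ▸ B.mul_mem hb (B.inv_mem hb'B)⟩, ?_⟩
  rw [map_mul, MonoidHom.mem_ker.mp ha'K, mul_one]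

theorem coe_mul_coe_eq_one_iff_of_map (f : G →* H)
    (hker : ∀ n ∈ f.ker, ∃ a ∈ A ⊓ f.ker, ∃ b ∈ B ⊓ f.ker, n = a * b)
    (x : A.map f) (y : B.map f) :
    (x : H) * y = 1 ↔ ∃ c ∈ A ⊓ B, (x : H) = f c ∧ (y : H) = (f c)⁻¹ := by
  rw [coe_mul_coe_eq_one_iff, ← map_inf_eq_of_forall_mem_ker_eq_mul A B f hker]
  simp only [mem_map, exists_exists_and_eq_and]

end Subgroup

/-- Let `G = AB` with `A`, `B` subgroups whose elements commute with each other, and let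
`Γ = A ∩ B`. Let `N` be a normal subgroup with `N = (A ∩ N)(B ∩ N)` and `π : G → G/N` the
quotient map. Then `(x, y) ↦ x * y : π(A) × π(B) → G/N` is a surjective group homomorphism
whose kernel is exactly `{(π c, (π c)⁻¹) : c ∈ Γ}`. -/
theorem almost_direct_product_quotient {G : Type*} [Group G] (A B : Subgroup G)
    (hcomm : ∀ a ∈ A, ∀ b ∈ B, a * b = b * a)
    (hAB : ∀ g : G, ∃ a ∈ A, ∃ b ∈ B, g = a * b)
    (N : Subgroup G) [N.Normal]
    (hN : ∀ n ∈ N, ∃ a ∈ A ⊓ N, ∃ b ∈ B ⊓ N, n = a * b) :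
    (∀ p q : ↥(A.map (QuotientGroup.mk' N)) × ↥(B.map (QuotientGroup.mk' N)),
      (((p * q).1 : G ⧸ N) * ((p * q).2 : G ⧸ N)) =
        ((p.1 : G ⧸ N) * (p.2 : G ⧸ N)) * ((q.1 : G ⧸ N) * (q.2 : G ⧸ N))) ∧
    Function.Surjective
      (fun p : ↥(A.map (QuotientGroup.mk' N)) × ↥(B.map (QuotientGroup.mk' N)) =>
        (p.1 : G ⧸ N) * (p.2 : G ⧸ N)) ∧
    (∀ p : ↥(A.map (QuotientGroup.mk' N)) × ↥(B.map (QuotientGroup.mk' N)),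
      (p.1 : G ⧸ N) * (p.2 : G ⧸ N) = 1 ↔
        ∃ c ∈ A ⊓ B, (p.1 : G ⧸ N) = QuotientGroup.mk' N c ∧
          (p.2 : G ⧸ N) = (QuotientGroup.mk' N c)⁻¹) := by
  set π := QuotientGroup.mk' N
  have hcomm' := Subgroup.commute_of_mem_map A B π hcomm
  have hker : ∀ n ∈ π.ker, ∃ a ∈ A ⊓ π.ker, ∃ b ∈ B ⊓ π.ker, n = a * b := by
    simpa only [π, QuotientGroup.ker_mk'] using hN
  refine ⟨?_, Subgroup.surjective_mul_map A B (QuotientGroup.mk'_surjective N) hAB,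
    fun p => Subgroup.coe_mul_coe_eq_one_iff_of_map A B π hker p.1 p.2⟩
  exact map_mul ((A.map π).subtype.noncommCoprod (B.map π).subtype
    fun x y => hcomm' x x.2 y y.2)
end

section
/- Let G and G' be compact Hausdorff topological groups which are connected and locally path-connected, let Γ ≤ G and Γ' ≤ G' be finite central subgroups, and let p : G → G/Γ and p' : G' → G'/Γ' be the quotient homomorphisms. Let f : G/Γ → G'/Γ' and f' : G'/Γ' → G/Γ be continuous maps with f(1)=1 and f'(1)=1, and suppose there are homotopies h : [0,1] × (G/Γ) → G/Γ from the identity map to f'∘f, and h' : [0,1] × (G'/Γ') → G'/Γ' from the identity map to f∘f', with h_t(1)=1 and h'_t(1)=1 for all t ∈ [0,1]. Let f̃ : G → G' and f̃' : G' → G be continuous maps with p'∘f̃ = f∘p, p∘f̃' = f'∘p', f̃(1)=1, and f̃'(1)=1. Then: (i) f̃(cx) = f̃(c)·f̃(x) for all c ∈ Γ and x ∈ G, and f̃'(c'x') = f̃'(c')·f̃'(x') for all c' ∈ Γ' and x' ∈ G'; (ii) f̃ maps Γ isomorphically onto Γ', with inverse the restriction of f̃' to Γ'; (iii) f̃ is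 a Γ-equivariant homotopy equivalence (with respect to Γ and Γ') with homotopy inverse f̃'. -/
open unitInterval

/-!
The quotient maps `p : G → G ⧸ Γ` and `p' : G' → G' ⧸ Γ'` by finite (hence discrete) normal
subgroups are covering maps, so everything follows from uniqueness and existence of lifts. Two
lifts of the same map out of a connected space agree once they agree at one point: this gives
the equivariance of `ft` and `ft'`, since `x ↦ ft (c * x)` and `x ↦ ft c * ft x` both lift
`f ∘ p` and agree at `1`. The homotopy `h`, precomposed with `p`, lifts to a homotopy `H` on `G`
starting at the identity; its end `H 1` lifts `f' ∘ f ∘ p` and fixes `1`, so it is `ft' ∘ ft`,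
and for `c ∈ Γ` both `H (t, c * x)` and `c * H (t, x)` lift `h (t, p x)` from the same starting
point.
-/

namespace IsCoveringMap

variable {G G' X X' : Type*} [Group G] [TopologicalSpace G] [ContinuousMul G]
  [PreconnectedSpace G] [Group G'] [TopologicalSpace G'] [Group X] [Group X']
  [TopologicalSpace X']

theorem lift_mul_of_mem_ker [ContinuousMul G'] {p : G →* X} {p' : G' →* X'}
    (cov : IsCoveringMap p') {f : X → X'} (hf1 : f 1 = 1) {ft : G → G'} (hft : Continuous ft)
    (hft1 : ft 1 = 1)
    (hlift : ∀ x, p' (ft x) = f (p x)) {c : G} (hc : c ∈ p.ker) (x : G) :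
    ft (c * x) = ft c * ft x := by
  have hpc : p c = 1 := hc
  refine congr_fun (cov.eq_of_comp_eq (g₁ := fun x ↦ ft (c * x)) (g₂ := fun x ↦ ft c * ft x)
    (by fun_prop) (by fun_prop) (funext fun x ↦ ?_) 1 (by simp [hft1])) x
  simp [hlift, hpc, hf1]

variable [TopologicalSpace X]

theorem exists_equivariant_liftHomotopy {p : G →* X} (cov : IsCoveringMap p)
    (h : C(I × X, X)) (hh0 : ∀ x, h (0, x) = x) (hhone : ∀ t, h (t, 1) = 1)
    {F : G → G} (hF : Continuous F) (hF1 : F 1 = 1) (hFlift : ∀ x, p (F x) = h (1, p x)) :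
    ∃ H : C(I × G, G), (∀ x, H (0, x) = x) ∧ (∀ x, H (1, x) = F x) ∧
      (∀ t, ∀ c ∈ p.ker, H (t, c) = c) ∧
      (∀ t, ∀ c ∈ p.ker, ∀ x, H (t, c * x) = c * H (t, x)) := by
  let H := cov.liftHomotopy (h.comp (.prodMap (.id I) ⟨p, cov.continuous⟩)) (.id G)
    (fun x ↦ by simp [hh0])
  have hHlift (t : I) (x : G) : p (H (t, x)) = h (t, p x) :=
    congr_fun (cov.liftHomotopy_lifts ..) (t, x)
  have hH0 (x : G) : H (0, x) = x := cov.liftHomotopy_zero ..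
  have hHone (t : I) : H (t, 1) = 1 :=
    congr_fun (cov.eq_of_comp_eq (g₁ := fun t ↦ H (t, 1)) (g₂ := fun _ ↦ 1) (by fun_prop)
      continuous_const (funext fun t ↦ by simp [hHlift, hhone]) 0 (hH0 1)) t
  have hHmul (c : G) (hc : c ∈ p.ker) (t : I) (x : G) : H (t, c * x) = c * H (t, x) := by
    have hpc : p c = 1 := hc
    refine congr_fun (cov.eq_of_comp_eq (g₁ := fun tx : I × G ↦ H (tx.1, c * tx.2))
      (g₂ := fun tx ↦ c * H tx) (by fun_prop) (by fun_prop) (funext fun tx ↦ ?_) (0, 1)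
      (by simp [hH0])) (t, x)
    simp [hHlift, hpc]
  have hH1 (x : G) : H (1, x) = F x :=
    congr_fun (cov.eq_of_comp_eq (g₁ := fun x ↦ H (1, x)) (by fun_prop) hF
      (funext fun x ↦ by simp [hHlift, hFlift]) 1 (by simp [hHone, hF1])) x
  exact ⟨H, hH0, hH1, fun t c hc ↦ by simpa [hHone] using hHmul c hc t 1,
    fun t c hc x ↦ hHmul c hc t x⟩

end IsCoveringMap

theorem MonoidHom.lift_mem_ker {G G' X X' : Type*} [Group G] [Group G'] [Group X] [Group X']
    {p : G →* X} {p' : G' →* X'} {f : X → X'} (hf1 : f 1 = 1) {ft : G → G'}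
    (hlift : ∀ x, p' (ft x) = f (p x)) {c : G} (hc : c ∈ p.ker) : ft c ∈ p'.ker := by
  rw [mem_ker, hlift, hc, hf1]

theorem lift_equivariant_htpy_equiv_general {G G' : Type*}
    [Group G] [TopologicalSpace G] [IsTopologicalGroup G] [T2Space G]
    [ConnectedSpace G]
    [Group G'] [TopologicalSpace G'] [IsTopologicalGroup G'] [T2Space G']
    [ConnectedSpace G']
    (Γ : Subgroup G) (Γ' : Subgroup G') [Γ.Normal] [Γ'.Normal]
    (hfinΓ : (Γ : Set G).Finite) (hfinΓ' : (Γ' : Set G').Finite)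
    (f : G ⧸ Γ → G' ⧸ Γ') (f' : G' ⧸ Γ' → G ⧸ Γ)
    (hf1 : f 1 = 1) (hf'1 : f' 1 = 1)
    (h : C(I × (G ⧸ Γ), G ⧸ Γ))
    (hh0 : ∀ x, h (0, x) = x) (hh1 : ∀ x, h (1, x) = f' (f x))
    (hhone : ∀ t : I, h (t, 1) = 1)
    (h' : C(I × (G' ⧸ Γ'), G' ⧸ Γ'))
    (hh'0 : ∀ x', h' (0, x') = x') (hh'1 : ∀ x', h' (1, x') = f (f' x'))
    (hh'one : ∀ t : I, h' (t, 1) = 1)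
    (ft : G → G') (ft' : G' → G) (hftc : Continuous ft) (hft'c : Continuous ft')
    (hlift : ∀ x : G, QuotientGroup.mk' Γ' (ft x) = f (QuotientGroup.mk' Γ x))
    (hlift' : ∀ x' : G', QuotientGroup.mk' Γ (ft' x') = f' (QuotientGroup.mk' Γ' x'))
    (hft1 : ft 1 = 1) (hft'1 : ft' 1 = 1) :
    -- (i) equivariance of the lifts:
    (∀ c ∈ Γ, ∀ x : G, ft (c * x) = ft c * ft x) ∧
    (∀ c' ∈ Γ', ∀ x' : G', ft' (c' * x') = ft' c' * ft' x') ∧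
    -- (ii) `ft` maps `Γ` isomorphically onto `Γ'`, with inverse the restriction of `ft'`:
    Set.BijOn ft (Γ : Set G) (Γ' : Set G') ∧
    (∀ c ∈ Γ, ft' (ft c) = c) ∧ (∀ c' ∈ Γ', ft (ft' c') = c') ∧
    -- (iii) `ft` is a `Γ`-equivariant homotopy equivalence with homotopy inverse `ft'`:
    IsEquivariantHtpyEquivWith Γ Γ' ft ft' := by
  simp only [← QuotientGroup.ker_mk' Γ, ← QuotientGroup.ker_mk' Γ']
  set p := QuotientGroup.mk' Γ
  set p' := QuotientGroup.mk' Γ'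
  have cov : IsCoveringMap p := (Γ.isQuotientCoveringMap hfinΓ.isDiscrete).isCoveringMap
  have cov' : IsCoveringMap p' := (Γ'.isQuotientCoveringMap hfinΓ'.isDiscrete).isCoveringMap
  have hmul (c) (hc : c ∈ p.ker) (x) : ft (c * x) = ft c * ft x :=
    cov'.lift_mul_of_mem_ker hf1 hftc hft1 hlift hc x
  have hmul' (c') (hc' : c' ∈ p'.ker) (x') : ft' (c' * x') = ft' c' * ft' x' :=
    cov.lift_mul_of_mem_ker hf'1 hft'c hft'1 hlift' hc' x'
  obtain ⟨H, hH0, hH1, hHc, hHmul⟩ := cov.exists_equivariant_liftHomotopy h hh0 hhone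
    (hft'c.comp hftc) (by simp [hft1, hft'1]) (fun x ↦ by simp [hlift', hlift, hh1])
  obtain ⟨H', hH'0, hH'1, hH'c, hH'mul⟩ := cov'.exists_equivariant_liftHomotopy h' hh'0 hh'one
    (hftc.comp hft'c) (by simp [hft1, hft'1]) (fun x' ↦ by simp [hlift', hlift, hh'1])
  have hinv (c) (hc : c ∈ p.ker) : ft' (ft c) = c := (hH1 c).symm.trans (hHc 1 c hc)
  have hinv' (c') (hc' : c' ∈ p'.ker) : ft (ft' c') = c' := (hH'1 c').symm.trans (hH'c 1 c' hc')
  have hbij : Set.BijOn ft p.ker p'.ker :=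
    Set.InvOn.bijOn ⟨hinv, hinv'⟩ (fun _ ↦ MonoidHom.lift_mem_ker hf1 hlift)
      (fun _ ↦ MonoidHom.lift_mem_ker hf'1 hlift')
  exact ⟨hmul, hmul', hbij, hinv, hinv', hftc, hft'c, hbij, hft1, hmul, hft'1, hmul',
    ⟨H, hH0, hH1, hHc, hHmul⟩, ⟨H', hH'0, hH'1, hH'c, hH'mul⟩⟩

/-- Lifting a homotopy equivalence `G/Γ ≃ G'/Γ'` to a `Γ`-equivariant homotopy equivalence
`G → G'`, where `Γ`, `Γ'` are finite central subgroups of the compact Hausdorff connected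
locally path-connected groups `G`, `G'`. -/
theorem lift_equivariant_htpy_equiv {G G' : Type*}
    [Group G] [TopologicalSpace G] [IsTopologicalGroup G] [CompactSpace G] [T2Space G]
    [ConnectedSpace G] [LocallyPathConnectedSpace G]
    [Group G'] [TopologicalSpace G'] [IsTopologicalGroup G'] [CompactSpace G'] [T2Space G']
    [ConnectedSpace G'] [LocallyPathConnectedSpace G']
    (Γ : Subgroup G) (Γ' : Subgroup G') [Γ.Normal] [Γ'.Normal]
    (hcen : Γ ≤ Subgroup.center G) (hcen' : Γ' ≤ Subgroup.center G')
    (hfinΓ : (Γ : Set G).Finite) (hfinΓ' : (Γ' : Set G').Finite)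
    (f : G ⧸ Γ → G' ⧸ Γ') (f' : G' ⧸ Γ' → G ⧸ Γ)
    (hfc : Continuous f) (hf'c : Continuous f')
    (hf1 : f 1 = 1) (hf'1 : f' 1 = 1)
    (h : C(I × (G ⧸ Γ), G ⧸ Γ))
    (hh0 : ∀ x, h (0, x) = x) (hh1 : ∀ x, h (1, x) = f' (f x))
    (hhone : ∀ t : I, h (t, 1) = 1)
    (h' : C(I × (G' ⧸ Γ'), G' ⧸ Γ'))
    (hh'0 : ∀ x', h' (0, x') = x') (hh'1 : ∀ x', h' (1, x') = f (f' x'))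
    (hh'one : ∀ t : I, h' (t, 1) = 1)
    (ft : G → G') (ft' : G' → G) (hftc : Continuous ft) (hft'c : Continuous ft')
    (hlift : ∀ x : G, QuotientGroup.mk' Γ' (ft x) = f (QuotientGroup.mk' Γ x))
    (hlift' : ∀ x' : G', QuotientGroup.mk' Γ (ft' x') = f' (QuotientGroup.mk' Γ' x'))
    (hft1 : ft 1 = 1) (hft'1 : ft' 1 = 1) :
    -- (i) equivariance of the lifts:
    (∀ c ∈ Γ, ∀ x : G, ft (c * x) = ft c * ft x) ∧
    (∀ c' ∈ Γ', ∀ x' : G', ft' (c' * x') = ft' c' * ft' x') ∧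
    -- (ii) `ft` maps `Γ` isomorphically onto `Γ'`, with inverse the restriction of `ft'`:
    Set.BijOn ft (Γ : Set G) (Γ' : Set G') ∧
    (∀ c ∈ Γ, ft' (ft c) = c) ∧ (∀ c' ∈ Γ', ft (ft' c') = c') ∧
    -- (iii) `ft` is a `Γ`-equivariant homotopy equivalence with homotopy inverse `ft'`:
    IsEquivariantHtpyEquivWith Γ Γ' ft ft' :=
  lift_equivariant_htpy_equiv_general Γ Γ' hfinΓ hfinΓ' f f' hf1 hf'1 h hh0 hh1 hhone h' hh'0 hh'1
    hh'one ft ft' hftc hft'c hlift hlift' hft1 hft'1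
end

section
/- Let G be a topological group with identity 1, and let G̃ be the set of homotopy classes, relative to endpoints, of paths in G starting at 1. Define [a] * [b] := [a + (a(1)·b)], where a(1)·b denotes the path t ↦ a(1)·b(t) and + denotes concatenation of paths. Then: (i) * is well-defined and makes G̃ a group, with identity the class of the constant path at 1; (ii) the endpoint map e : G̃ → G, [a] ↦ a(1), is a group homomorphism whose image is the path component of 1 in G; (iii) the kernel of e is the set of homotopy classes of loops at 1, on which the operation * coincides with concatenation of loops, so that the kernel is the fundamental group π₁(G,1); and (iv) this kernel is a central subgroup of G̃. -/
/-!
Writing `a + x·b` as the pointwise product `(a + 1_x)·(1_1 + b)`, where `1_x` is the constant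
path at `x`, shows that `[a] * [b]` is the class of the pointwise product `t ↦ a(t) b(t)`, which
only depends on the classes of `a` and `b`. The group axioms then hold already for paths,
pointwise, with inverse `t ↦ a(t)⁻¹`. If `a` is a loop at `1`, then `(a + 1_1)·(1_1 + b)` and
`(1_1 + b)·(a + 1_1)` are both the concatenation `a + b`, so `[a][b] = [b][a]`.
-/

/-- The underlying set of the universal cover of a topological group `G`: homotopy classes
(relative to endpoints) of paths in `G` starting at the identity `1`. -/
abbrev UnivCover (G : Type*) [TopologicalSpace G] [Group G] : Type _ :=
  Σ x : G, Path.Homotopic.Quotient (1 : G) x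

/-- The left translate `a(1) · b` of a path `b` starting at `1` by an element `x`. -/
def mulPath {G : Type*} [TopologicalSpace G] [Group G] [IsTopologicalGroup G]
    (x : G) {y : G} (b : Path (1 : G) y) : Path x (x * y) :=
  (b.map (continuous_mul_left x)).cast (mul_one x).symm rfl

namespace Path.Homotopic

variable {X : Type*} [TopologicalSpace X]

theorem sigma_mk_eq_of_apply_eq {x₀ x y : X} {γ : Path x₀ x} {δ : Path x₀ y}
    (h : ∀ t, γ t = δ t) :
    (⟨x, ⟦γ⟧⟩ : Σ z, Path.Homotopic.Quotient x₀ z) = ⟨y, ⟦δ⟧⟩ :=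
  Sigma.ext (by simpa using h 1) (hpath_hext h)

theorem range_sigma_fst (x₀ : X) :
    Set.range (Sigma.fst : (Σ x, Path.Homotopic.Quotient x₀ x) → X) = pathComponent x₀ := by
  ext x
  constructor
  · rintro ⟨⟨x, ⟨γ⟩⟩, rfl⟩
    exact ⟨γ⟩
  · rintro ⟨γ⟩
    exact ⟨⟨x, ⟦γ⟧⟩, rfl⟩

theorem sigma_fst_preimage_singleton (x₀ : X) :
    (Sigma.fst ⁻¹' {x₀} : Set (Σ x, Path.Homotopic.Quotient x₀ x)) =
      Set.range fun γ : Path x₀ x₀ => ⟨x₀, ⟦γ⟧⟩ := by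
  ext ⟨x, c⟩
  constructor
  · rintro (rfl : x = x₀)
    obtain ⟨γ, rfl⟩ := Quotient.exists_rep c
    exact ⟨γ, rfl⟩
  · rintro ⟨γ, h⟩
    exact congrArg Sigma.fst h.symm

theorem mul [Mul X] [ContinuousMul X] {a₁ b₁ a₂ b₂ : X}
    {γ₁ γ₁' : Path a₁ b₁} {γ₂ γ₂' : Path a₂ b₂} (h₁ : γ₁.Homotopic γ₁') (h₂ : γ₂.Homotopic γ₂') :
    (γ₁.mul γ₂).Homotopic (γ₁'.mul γ₂') :=
  Homotopic.map (Nonempty.map2 prodHomotopy h₁ h₂) ⟨_, continuous_mul⟩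

end Path.Homotopic

namespace UnivCover

open Path.Homotopic

variable {G : Type*} [TopologicalSpace G] [Group G] [IsTopologicalGroup G]

@[simp]
theorem mulPath_apply (x : G) {y : G} (b : Path (1 : G) y) (t : unitInterval) :
    mulPath x b t = x * b t :=
  rfl

def pathMul {x y : G} (a : Path (1 : G) x) (b : Path (1 : G) y) : Path (1 : G) (x * y) :=
  (a.mul b).cast (one_mul 1).symm rfl

@[simp]
theorem pathMul_apply {x y : G} (a : Path (1 : G) x) (b : Path (1 : G) y) (t : unitInterval) :
    pathMul a b t = a t * b t :=
  rfl

theorem trans_mulPath_homotopic_pathMul {x y : G} (a : Path (1 : G) x) (b : Path (1 : G) y) :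
    (a.trans (mulPath x b)).Homotopic (pathMul a b) := by
  have h : a.trans (mulPath x b) = pathMul (a.trans (Path.refl x)) ((Path.refl 1).trans b) := by
    ext t
    simp only [Path.trans_apply, mulPath_apply, pathMul_apply, Path.refl_apply]
    split_ifs <;> simp
  rw [h]
  exact ((trans_refl a).mul (refl_trans b)).pathCast _ _

instance : Mul (UnivCover G) where
  mul p q := ⟨p.1 * q.1, Quotient.map₂ pathMul (fun _ _ ha _ _ hb => (ha.mul hb).pathCast _ _)
    p.2 q.2⟩

instance : One (UnivCover G) :=
  ⟨⟨1, ⟦Path.refl 1⟧⟩⟩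

instance : Inv (UnivCover G) where
  inv p := ⟨p.1⁻¹, Quotient.map (fun a => a.inv.cast inv_one.symm rfl)
    (fun _ _ h => (h.map ⟨_, continuous_inv⟩).pathCast _ _) p.2⟩

theorem mk_mul_mk_eq_trans {x y : G} (a : Path (1 : G) x) (b : Path (1 : G) y) :
    (⟨x, ⟦a⟧⟩ * ⟨y, ⟦b⟧⟩ : UnivCover G) = ⟨x * y, ⟦a.trans (mulPath x b)⟧⟩ :=
  congrArg (Sigma.mk _) (Quotient.sound (trans_mulPath_homotopic_pathMul a b).symm)

theorem mk_mul_mk_eq_trans_of_loops (a b : Path (1 : G) 1) :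
    (⟨1, ⟦a⟧⟩ * ⟨1, ⟦b⟧⟩ : UnivCover G) = ⟨1, ⟦a.trans b⟧⟩ :=
  (mk_mul_mk_eq_trans a b).trans <| sigma_mk_eq_of_apply_eq fun t => by
    simp only [Path.trans_apply, mulPath_apply, one_mul]

instance : Group (UnivCover G) :=
  Group.ofLeftAxioms
    (by
      rintro ⟨x, ⟨a⟩⟩ ⟨y, ⟨b⟩⟩ ⟨z, ⟨c⟩⟩
      exact sigma_mk_eq_of_apply_eq fun t => mul_assoc (a t) (b t) (c t))
    (by
      rintro ⟨x, ⟨a⟩⟩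
      exact sigma_mk_eq_of_apply_eq fun t => one_mul (a t))
    (by
      rintro ⟨x, ⟨a⟩⟩
      exact sigma_mk_eq_of_apply_eq fun t => inv_mul_cancel (a t))

theorem fst_mul (p q : UnivCover G) : (p * q).1 = p.1 * q.1 :=
  rfl

theorem mul_comm_of_fst_eq_one {p : UnivCover G} (hp : p.1 = 1) (q : UnivCover G) :
    p * q = q * p := by
  obtain ⟨x, ⟨a⟩⟩ := p
  obtain rfl : x = 1 := hp
  obtain ⟨y, ⟨b⟩⟩ := q
  calc (⟨1, ⟦a⟧⟩ * ⟨y, ⟦b⟧⟩ : UnivCover G)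
      = ⟨1 * y, ⟦pathMul (a.trans (Path.refl 1)) ((Path.refl 1).trans b)⟧⟩ :=
        congrArg (Sigma.mk _) (Quotient.sound ((trans_refl a).mul (refl_trans b)).symm)
    _ = ⟨y * 1, ⟦pathMul ((Path.refl 1).trans b) (a.trans (Path.refl 1))⟧⟩ :=
        sigma_mk_eq_of_apply_eq fun t => by
          simp only [pathMul_apply, Path.trans_apply, Path.refl_apply]
          split_ifs <;> simp
    _ = ⟨y, ⟦b⟧⟩ * ⟨1, ⟦a⟧⟩ :=
        congrArg (Sigma.mk _) (Quotient.sound ((refl_trans b).mul (trans_refl a)))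

end UnivCover

/-- The operation `[a] * [b] := [a + (a(1)·b)]` is well defined on the set `G̃` of homotopy
classes of paths starting at `1` and makes it a group; the endpoint map `e : G̃ → G` is a group
homomorphism with image the path component of `1`, whose kernel is the set of homotopy classes
of loops at `1`, on which the operation coincides with concatenation of loops (so the kernel is
the fundamental group `π₁(G,1)`); moreover this kernel is central in `G̃`. -/
theorem univCover_group_structure (G : Type*) [TopologicalSpace G] [Group G]
    [IsTopologicalGroup G] :
    ∃ (mul : UnivCover G → UnivCover G → UnivCover G) (one : UnivCover G)
      (inv : UnivCover G → UnivCover G),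
      -- (i) `mul` is well defined by `[a] * [b] = [a + (a(1)·b)]` ...
      (∀ (x y : G) (a : Path (1 : G) x) (b : Path (1 : G) y),
        mul ⟨x, ⟦a⟧⟩ ⟨y, ⟦b⟧⟩ = ⟨x * y, ⟦a.trans (mulPath x b)⟧⟩) ∧
      -- ... the identity is the class of the constant path at `1` ...
      (one = ⟨1, ⟦Path.refl (1 : G)⟧⟩) ∧
      -- ... and these data form a group:
      (∀ p q r, mul (mul p q) r = mul p (mul q r)) ∧
      (∀ p, mul one p = p) ∧ (∀ p, mul p one = p) ∧
      (∀ p, mul (inv p) p = one) ∧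
      -- (ii) the endpoint map `e : [a] ↦ a(1)` is a group homomorphism whose image is the
      -- path component of `1` in `G`:
      (∀ p q, (mul p q).1 = p.1 * q.1) ∧
      (Set.range (fun p : UnivCover G => p.1) = pathComponent (1 : G)) ∧
      -- (iii) the kernel of `e` is the set of homotopy classes of loops at `1`, and on it the
      -- operation coincides with concatenation of loops (hence the kernel is `π₁(G,1)`):
      ({p : UnivCover G | p.1 = 1} =
        Set.range (fun γ : Path (1 : G) (1 : G) => (⟨1, ⟦γ⟧⟩ : UnivCover G))) ∧
      (∀ a b : Path (1 : G) (1 : G), mul ⟨1, ⟦a⟧⟩ ⟨1, ⟦b⟧⟩ = ⟨1, ⟦a.trans b⟧⟩) ∧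
      -- (iv) the kernel of `e` is central in `G̃`:
      (∀ p q : UnivCover G, p.1 = 1 → mul p q = mul q p) := by
  refine ⟨(· * ·), 1, (·⁻¹), fun _ _ a b => UnivCover.mk_mul_mk_eq_trans a b, rfl, mul_assoc,
    one_mul, mul_one, inv_mul_cancel, UnivCover.fst_mul, Path.Homotopic.range_sigma_fst 1,
    Path.Homotopic.sigma_fst_preimage_singleton 1, UnivCover.mk_mul_mk_eq_trans_of_loops,
    fun _ q hp => UnivCover.mul_comm_of_fst_eq_one hp q⟩
end
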